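/- arXiv:1308.4081 — 5 statements merged into one kernel-verified Lean document; each statement's English description precedes it below -/
import Mathlib

section
/- For any Ferrers board B = (b_1,...,b_n) with weakly increasing nonnegative column heights, and any positive integer m, the sum over k from 0 to n of r_{k,m}(B) · x↓_{n-k,m} equals the product over j from 1 to n of factors F_j, where F_j = x + ⌊b_j⌋_m − (j−1)m + ρ_m(z) if j is the last index in its zone z, and F_j = x + ⌊b_j⌋_m − (j−1)m otherwise. -/
/-- The `m`-falling factorial `x↓_{n,m} = x(x-m)(x-2m)⋯(x-(n-1)m)`. -/
def fallFact (x : ℤ) (n m : ℕ) : ℤ := ∏ i ∈ Finset.range n, (x - (m : ℤ) * i)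

/-- `(i, j)` (row `i`, column `j`, both 1-indexed) is a cell of the Ferrers board
with column heights `b 1, …, b n`. -/
def IsCell (b : ℕ → ℕ) (n : ℕ) (c : ℕ × ℕ) : Prop :=
  1 ≤ c.2 ∧ c.2 ≤ n ∧ 1 ≤ c.1 ∧ c.1 ≤ b c.2

/-- An `m`-level rook placement on the board: cells of the board, no two rooks in the
same column, and no two rooks in the same level (level of row `i` is `(i-1)/m`). -/
def IsMLevelPlacement (m : ℕ) (b : ℕ → ℕ) (n : ℕ) (P : Finset (ℕ × ℕ)) : Prop :=
  (∀ c ∈ P, IsCell b n c) ∧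
  (∀ c ∈ P, ∀ c' ∈ P, c.2 = c'.2 → c = c') ∧
  (∀ c ∈ P, ∀ c' ∈ P, (c.1 - 1) / m = (c'.1 - 1) / m → c = c')

/-- `r_{k,m}(B)`: the number of `m`-level rook placements with `k` rooks. -/
noncomputable def rkm (m : ℕ) (b : ℕ → ℕ) (n k : ℕ) : ℕ :=
  Nat.card {P : Finset (ℕ × ℕ) // IsMLevelPlacement m b n P ∧ P.card = k}

/-- The `m`-remainder of the zone of column `j`: the sum of `b i mod m` over all
columns `i` in the same zone as `j` (for a monotone board, the zone of `j` is exactly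
the set of columns with the same `m`-floor). -/
def zoneRem (m : ℕ) (b : ℕ → ℕ) (n j : ℕ) : ℕ :=
  ∑ i ∈ Finset.Icc 1 n, if m * (b i / m) = m * (b j / m) then b i % m else 0

/-! Remove the last column, of height `N = q m + ρ` with `ρ < m`, leaving the board `B'`. A rook in
the removed column must avoid the levels of the `k` rooks already on `B'`, all of which lie at
levels `≤ q`; each such level blocks `m` of the column's `N` rows, except level `q`, which blocks
only `ρ`. The placements on `B'` avoiding level `q` are exactly those on `B'` cut off at height
`q m`, call it `B''`, so
`r_{k+1,m}(B) = r_{k+1,m}(B') + (q m + m - k m) r_{k,m}(B') - (m - ρ) r_{k,m}(B'')`.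
Against the falling factorials this becomes a recurrence for the left-hand side in terms of `B'`
and `B''`. The product obeys the same recurrence: `B`, `B'` and `B''` share the factors of all
zones below the top one, and the top zone of `B''` has remainder `0`. -/

open Finset

instance (m : ℕ) (b : ℕ → ℕ) (n : ℕ) (P : Finset (ℕ × ℕ)) :
    Decidable (IsMLevelPlacement m b n P) := by
  unfold IsMLevelPlacement IsCell; infer_instance

def truncate (b : ℕ → ℕ) (h j : ℕ) : ℕ := min (b j) h

lemma MonotoneOn.truncate {b : ℕ → ℕ} {s : Set ℕ} (hb : MonotoneOn b s) (h : ℕ) :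
    MonotoneOn (truncate b h) s :=
  fun _ hi _ hj hij => min_le_min_right h (hb hi hj hij)

def levels (m : ℕ) (P : Finset (ℕ × ℕ)) : Finset ℕ := P.image fun c => (c.1 - 1) / m

def freeRows (m N : ℕ) (P : Finset (ℕ × ℕ)) : Finset ℕ := {i ∈ Icc 1 N | (i - 1) / m ∉ levels m P}

def placements (m : ℕ) (b : ℕ → ℕ) (n k : ℕ) : Finset (Finset (ℕ × ℕ)) :=
  {P ∈ (Icc 1 ((Icc 1 n).sup b) ×ˢ Icc 1 n).powerset | IsMLevelPlacement m b n P ∧ #P = k}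

section Placements

variable {m : ℕ} {b : ℕ → ℕ} {n k : ℕ} {P : Finset (ℕ × ℕ)}

lemma IsMLevelPlacement.mono {Q : Finset (ℕ × ℕ)} (hP : IsMLevelPlacement m b n P) (hQ : Q ⊆ P) :
    IsMLevelPlacement m b n Q :=
  ⟨fun c hc => hP.1 c (hQ hc), fun c hc c' hc' => hP.2.1 c (hQ hc) c' (hQ hc'),
    fun c hc c' hc' => hP.2.2 c (hQ hc) c' (hQ hc')⟩

lemma isMLevelPlacement_insert_iff {c : ℕ × ℕ} (hc : c ∉ P) :
    IsMLevelPlacement m b n (insert c P) ↔ IsMLevelPlacement m b n P ∧ IsCell b n c ∧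
      ∀ c' ∈ P, c'.2 ≠ c.2 ∧ (c'.1 - 1) / m ≠ (c.1 - 1) / m := by
  constructor
  · intro h
    refine ⟨h.mono (subset_insert c P), h.1 c (mem_insert_self c P), fun c' hc' => ?_⟩
    have hne : c' ≠ c := ne_of_mem_of_not_mem hc' hc
    exact ⟨fun h' => hne (h.2.1 c' (mem_insert_of_mem hc') c (mem_insert_self c P) h'),
      fun h' => hne (h.2.2 c' (mem_insert_of_mem hc') c (mem_insert_self c P) h')⟩
  · rintro ⟨hP, hcell, hfree⟩
    refine ⟨fun c' hc' => ?_, fun c₁ h₁ c₂ h₂ h => ?_, fun c₁ h₁ c₂ h₂ h => ?_⟩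
    · rcases mem_insert.1 hc' with rfl | hc'
      exacts [hcell, hP.1 c' hc']
    · rcases mem_insert.1 h₁ with rfl | p₁ <;> rcases mem_insert.1 h₂ with rfl | p₂
      exacts [rfl, absurd h.symm (hfree c₂ p₂).1, absurd h (hfree c₁ p₁).1, hP.2.1 c₁ p₁ c₂ p₂ h]
    · rcases mem_insert.1 h₁ with rfl | p₁ <;> rcases mem_insert.1 h₂ with rfl | p₂
      exacts [rfl, absurd h.symm (hfree c₂ p₂).2, absurd h (hfree c₁ p₁).2, hP.2.2 c₁ p₁ c₂ p₂ h]

lemma isMLevelPlacement_succ_iff (hP : ∀ c ∈ P, c.2 ≤ n) :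
    IsMLevelPlacement m b (n + 1) P ↔ IsMLevelPlacement m b n P := by
  unfold IsMLevelPlacement IsCell
  constructor <;> rintro ⟨hcell, hcol, hlev⟩ <;> refine ⟨fun c hc => ?_, hcol, hlev⟩
  · have := hcell c hc; have := hP c hc; omega
  · have := hcell c hc; omega

lemma isMLevelPlacement_truncate_iff {h : ℕ} :
    IsMLevelPlacement m (truncate b h) n P ↔ IsMLevelPlacement m b n P ∧ ∀ c ∈ P, c.1 ≤ h := by
  simp only [IsMLevelPlacement, IsCell, truncate, le_min_iff]
  grind

lemma mem_placements : P ∈ placements m b n k ↔ IsMLevelPlacement m b n P ∧ #P = k := by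
  refine ⟨fun h => (mem_filter.1 h).2, fun h => mem_filter.2 ⟨mem_powerset.2 fun c hc => ?_, h⟩⟩
  obtain ⟨h1, h2, h3, h4⟩ := h.1.1 c hc
  exact mem_product.2 ⟨mem_Icc.2 ⟨h3, h4.trans (le_sup (mem_Icc.2 ⟨h1, h2⟩))⟩, mem_Icc.2 ⟨h1, h2⟩⟩

lemma rkm_eq_card : rkm m b n k = #(placements m b n k) := by
  rw [rkm, ← Nat.card_eq_finsetCard]
  exact Nat.card_congr (Equiv.subtypeEquivRight fun P => mem_placements.symm)

lemma rkm_zero : rkm m b n 0 = 1 := by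
  rw [rkm_eq_card, card_eq_one]
  refine ⟨∅, eq_singleton_iff_unique_mem.2 ⟨mem_placements.2 ⟨?_, rfl⟩, fun P hP => ?_⟩⟩
  · simp [IsMLevelPlacement]
  · exact card_eq_zero.1 (mem_placements.1 hP).2

lemma rkm_eq_zero_of_lt (h : n < k) : rkm m b n k = 0 := by
  rw [rkm_eq_card, card_eq_zero, eq_empty_iff_forall_notMem]
  intro P hP
  obtain ⟨⟨hcell, hcol, -⟩, rfl⟩ := mem_placements.1 hP
  have : #P ≤ #(Icc 1 n) :=
    card_le_card_of_injOn Prod.snd (fun c hc => mem_Icc.2 ⟨(hcell c hc).1, (hcell c hc).2.1⟩)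
      fun c hc c' hc' => hcol c hc c' hc'
  rw [Nat.card_Icc] at this
  omega

lemma card_placements_succ :
    #(placements m b (n + 1) k) =
      #(placements m b n k) + #{P ∈ placements m b (n + 1) k | ∃ c ∈ P, c.2 = n + 1} := by
  rw [← card_filter_add_card_filter_not (fun P => ∃ c ∈ P, c.2 = n + 1), add_comm]
  congr 2
  ext P
  simp only [mem_filter, mem_placements, not_exists, not_and]
  constructor
  · rintro ⟨⟨hP, hk⟩, hcol⟩
    have hle : ∀ c ∈ P, c.2 ≤ n := fun c hc => by
      have := (hP.1 c hc).2.1; have := hcol c hc; omega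
    exact ⟨(isMLevelPlacement_succ_iff hle).1 hP, hk⟩
  · rintro ⟨hP, hk⟩
    have hle : ∀ c ∈ P, c.2 ≤ n := fun c hc => (hP.1 c hc).2.1
    exact ⟨⟨(isMLevelPlacement_succ_iff hle).2 hP, hk⟩, fun c hc => by have := hle c hc; omega⟩

lemma isMLevelPlacement_insert_succ_iff {i : ℕ} (hP : ∀ c ∈ P, c.2 ≤ n) :
    IsMLevelPlacement m b (n + 1) (insert (i, n + 1) P) ↔
      IsMLevelPlacement m b n P ∧ i ∈ freeRows m (b (n + 1)) P := by
  have hi : (i, n + 1) ∉ P := fun h => by have := hP _ h; omega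
  rw [isMLevelPlacement_insert_iff hi, isMLevelPlacement_succ_iff hP]
  simp only [freeRows, levels, IsCell, mem_filter, mem_Icc, mem_image, not_exists, not_and]
  constructor
  · rintro ⟨hP', ⟨-, -, h1, h2⟩, hfree⟩
    exact ⟨hP', ⟨h1, h2⟩, fun c hc => (hfree c hc).2⟩
  · rintro ⟨hP', ⟨h1, h2⟩, hfree⟩
    exact ⟨hP', ⟨by omega, le_rfl, h1, h2⟩, fun c hc => ⟨by have := hP c hc; omega, hfree c hc⟩⟩

lemma eq_of_insert_last_column_eq {P P' : Finset (ℕ × ℕ)} {i i' : ℕ} (hP : ∀ c ∈ P, c.2 ≤ n)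
    (hP' : ∀ c ∈ P', c.2 ≤ n) (h : insert (i, n + 1) P = insert (i', n + 1) P') :
    i = i' ∧ P = P' := by
  have hi : i = i' := by
    rcases mem_insert.1 (h ▸ mem_insert_self (i, n + 1) P) with h' | h'
    · exact congrArg Prod.fst h'
    · have := hP' _ h'; omega
  subst hi
  refine ⟨rfl, ?_⟩
  rw [← erase_insert (fun h => by have := hP _ h; omega : (i, n + 1) ∉ P),
    ← erase_insert (fun h => by have := hP' _ h; omega : (i, n + 1) ∉ P'), h]

lemma card_placements_succ_of_mem_column :
    #{P ∈ placements m b (n + 1) (k + 1) | ∃ c ∈ P, c.2 = n + 1} =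
      ∑ P ∈ placements m b n k, #(freeRows m (b (n + 1)) P) := by
  rw [← card_sigma]
  symm
  have hcol : ∀ P ∈ placements m b n k, ∀ c ∈ P, c.2 ≤ n :=
    fun P hP c hc => ((mem_placements.1 hP).1.1 c hc).2.1
  apply card_nbij (fun p => insert (p.2, n + 1) p.1)
  · rintro ⟨P, i⟩ hPi
    obtain ⟨hP, hi⟩ := mem_sigma.1 hPi
    have hi' : (i, n + 1) ∉ P := fun h => by have := hcol P hP _ h; omega
    refine mem_filter.2 ⟨mem_placements.2 ⟨?_, ?_⟩, _, mem_insert_self _ _, rfl⟩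
    · exact (isMLevelPlacement_insert_succ_iff (hcol P hP)).2 ⟨(mem_placements.1 hP).1, hi⟩
    · rw [card_insert_of_notMem hi', (mem_placements.1 hP).2]
  · rintro ⟨P, i⟩ hPi ⟨P', i'⟩ hPi' h
    obtain ⟨rfl, rfl⟩ := eq_of_insert_last_column_eq (hcol P (mem_sigma.1 hPi).1)
      (hcol P' (mem_sigma.1 hPi').1) h
    rfl
  · intro P hPS
    obtain ⟨hP, c₀, hc₀, hc₀n⟩ := mem_filter.1 (mem_coe.1 hPS)
    obtain ⟨hPl, hk⟩ := mem_placements.1 hP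
    have hcol' : ∀ c ∈ P.erase c₀, c.2 ≤ n := fun c hc => by
      obtain ⟨hne, hc⟩ := mem_erase.1 hc
      have := (hPl.1 c hc).2.1
      have : c.2 ≠ n + 1 := fun h => hne (hPl.2.1 c hc c₀ hc₀ (h.trans hc₀n.symm))
      omega
    have hins : insert (c₀.1, n + 1) (P.erase c₀) = P := by
      rw [← hc₀n, insert_erase hc₀]
    rw [← hins] at hPl
    obtain ⟨hP', hfree⟩ := (isMLevelPlacement_insert_succ_iff hcol').1 hPl
    refine ⟨⟨P.erase c₀, c₀.1⟩, mem_sigma.2 ⟨mem_placements.2 ⟨hP', ?_⟩, hfree⟩, hins⟩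
    rw [card_erase_of_mem hc₀, hk, Nat.add_sub_cancel]

lemma card_filter_sub_one_div_eq (hm : 0 < m) {N l : ℕ} (hl : l ≤ N / m) :
    #{i ∈ Icc 1 N | (i - 1) / m = l} = if l = N / m then N % m else m := by
  have hrows : {i ∈ Icc 1 N | (i - 1) / m = l} = Icc (l * m + 1) (min N (l * m + m)) := by
    ext i
    simp only [mem_filter, mem_Icc, Nat.div_eq_iff hm, le_min_iff]
    omega
  have hN := Nat.div_add_mod' N m
  have hρ := Nat.mod_lt N hm
  rw [hrows, Nat.card_Icc]
  split_ifs with h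
  · subst h; omega
  · have : (l + 1) * m ≤ N / m * m := Nat.mul_le_mul_right m (by omega)
    rw [add_mul, one_mul] at this
    omega

lemma card_freeRows (hm : 0 < m) {N : ℕ} (hP : IsMLevelPlacement m b n P)
    (hN : ∀ c ∈ P, c.1 ≤ N) :
    (#(freeRows m N P) : ℤ) =
      N - m * #P + (m - N % m : ℤ) * (if N / m ∈ levels m P then 1 else 0) := by
  have hlevels : #(levels m P) = #P :=
    card_image_of_injOn fun c hc c' hc' h => hP.2.2 c hc c' hc' h
  have hsplit : #(freeRows m N P) + #{i ∈ Icc 1 N | (i - 1) / m ∈ levels m P} = N := by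
    rw [freeRows, add_comm, card_filter_add_card_filter_not, Nat.card_Icc, Nat.add_sub_cancel]
  have hblocked : #{i ∈ Icc 1 N | (i - 1) / m ∈ levels m P} =
      ∑ l ∈ levels m P, #{i ∈ Icc 1 N | (i - 1) / m = l} := by
    rw [card_eq_sum_card_fiberwise (f := fun i => (i - 1) / m) (t := levels m P)
      fun i hi => mem_coe.2 (mem_filter.1 hi).2]
    refine sum_congr rfl fun l hl => ?_
    rw [filter_filter]
    exact congrArg card (filter_congr fun i _ => ⟨And.right, fun h => ⟨by simp only [h, hl], h⟩⟩)
  have hcount : ∀ l ∈ levels m P,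
      (#{i ∈ Icc 1 N | (i - 1) / m = l} : ℤ) =
        m - (m - N % m : ℤ) * if l = N / m then 1 else 0 := by
    intro l hl
    obtain ⟨c, hc, rfl⟩ := mem_image.1 hl
    rw [card_filter_sub_one_div_eq hm (Nat.div_le_div_right (by have := hN c hc; omega))]
    split_ifs <;> push_cast <;> ring
  have := congrArg (Nat.cast : ℕ → ℤ) hsplit
  push_cast at this
  rw [hblocked, Nat.cast_sum, sum_congr rfl hcount, sum_sub_distrib, ← mul_sum, sum_ite_eq',
    sum_const, hlevels, nsmul_eq_mul] at this
  linear_combination this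

lemma sub_one_div_eq_div_iff (hm : 0 < m) {i N : ℕ} (hi : 1 ≤ i) (hiN : i ≤ N) :
    (i - 1) / m = N / m ↔ m * (N / m) < i := by
  constructor
  · intro h
    have := Nat.div_mul_le_self (i - 1) m
    rw [h, mul_comm] at this
    omega
  · intro h
    refine le_antisymm (Nat.div_le_div_right (by omega)) ((Nat.le_div_iff_mul_le hm).2 ?_)
    rw [mul_comm] at h
    omega

lemma IsMLevelPlacement.fst_le (hP : IsMLevelPlacement m b n P)
    (hb : MonotoneOn b (Set.Icc 1 (n + 1))) {c : ℕ × ℕ} (hc : c ∈ P) : c.1 ≤ b (n + 1) := by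
  obtain ⟨h1, h2, -, h4⟩ := hP.1 c hc
  exact h4.trans (hb ⟨h1, by omega⟩ ⟨by omega, le_rfl⟩ (by omega))

lemma filter_notMem_levels_placements (hm : 0 < m) (hb : MonotoneOn b (Set.Icc 1 (n + 1))) :
    {P ∈ placements m b n k | b (n + 1) / m ∉ levels m P} =
      placements m (truncate b (m * (b (n + 1) / m))) n k := by
  ext P
  simp only [mem_filter, mem_placements, isMLevelPlacement_truncate_iff, levels, mem_image,
    not_exists, not_and]
  constructor
  · rintro ⟨⟨hP, hk⟩, htop⟩
    refine ⟨⟨hP, fun c hc => ?_⟩, hk⟩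
    have := (sub_one_div_eq_div_iff hm (hP.1 c hc).2.2.1 (hP.fst_le hb hc)).not.1 (htop c hc)
    omega
  · rintro ⟨⟨hP, hlow⟩, hk⟩
    refine ⟨⟨hP, hk⟩, fun c hc h => ?_⟩
    have := (sub_one_div_eq_div_iff hm (hP.1 c hc).2.2.1 (hP.fst_le hb hc)).1 h
    have := hlow c hc
    omega

theorem rkm_succ_succ (hm : 0 < m) (hb : MonotoneOn b (Set.Icc 1 (n + 1))) (k : ℕ) :
    (rkm m b (n + 1) (k + 1) : ℤ) =
      rkm m b n (k + 1) + (↑(m * (b (n + 1) / m)) + m - m * k : ℤ) * rkm m b n k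
        - (m - b (n + 1) % m : ℤ) * rkm m (truncate b (m * (b (n + 1) / m))) n k := by
  set N := b (n + 1)
  have hfree : ∀ P ∈ placements m b n k, (#(freeRows m N P) : ℤ) =
      N - m * k + (m - N % m : ℤ) * if N / m ∈ levels m P then 1 else 0 := fun P hP => by
    obtain ⟨hPl, hk⟩ := mem_placements.1 hP
    rw [card_freeRows hm hPl fun c hc => hPl.fst_le hb hc, hk]
  have htop : (∑ P ∈ placements m b n k, if N / m ∈ levels m P then 1 else 0 : ℤ) =
      #(placements m b n k) - #(placements m (truncate b (m * (N / m))) n k) := by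
    rw [sum_boole, ← filter_notMem_levels_placements hm hb, eq_sub_iff_add_eq]
    exact_mod_cast card_filter_add_card_filter_not _
  have hN := congrArg (Nat.cast : ℕ → ℤ) (Nat.div_add_mod N m)
  push_cast at hN
  rw [rkm_eq_card, rkm_eq_card, rkm_eq_card, rkm_eq_card, card_placements_succ,
    card_placements_succ_of_mem_column]
  push_cast
  rw [sum_congr rfl hfree, sum_add_distrib, sum_const, ← mul_sum, htop, nsmul_eq_mul]
  linear_combination -(#(placements m b n k) : ℤ) * hN

end Placements

lemma fallFact_succ (x : ℤ) (n m : ℕ) :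
    fallFact x (n + 1) m = fallFact x n m * (x - m * n) :=
  prod_range_succ _ _

lemma sum_mul_fallFact_succ (x : ℤ) (m n : ℕ) (r s t : ℕ → ℤ) (c d : ℤ)
    (h0 : s 0 = r 0) (hr : r (n + 1) = 0)
    (hs : ∀ k, s (k + 1) = r (k + 1) + (c - m * k) * r k - d * t k) :
    ∑ k ∈ range (n + 1 + 1), s k * fallFact x (n + 1 - k) m =
      (x - m * n + c) * ∑ k ∈ range (n + 1), r k * fallFact x (n - k) m
        - d * ∑ k ∈ range (n + 1), t k * fallFact x (n - k) m := by
  have hshift : ∑ k ∈ range (n + 1), r (k + 1) * fallFact x (n - k) m + r 0 * fallFact x (n + 1) m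
      = ∑ k ∈ range (n + 1), r k * fallFact x (n - k) m * (x - m * (n - k : ℤ)) := by
    have := sum_range_succ' (fun k => r k * fallFact x (n + 1 - k) m) (n + 1)
    rw [sum_range_succ, hr, zero_mul, add_zero] at this
    simp only [Nat.add_sub_add_right, Nat.sub_zero] at this
    rw [← this]
    refine sum_congr rfl fun k hk => ?_
    have hk : k ≤ n := Nat.lt_succ_iff.1 (mem_range.1 hk)
    rw [Nat.sub_add_comm hk, fallFact_succ, Nat.cast_sub hk, mul_assoc]
  have hterm : ∀ k ∈ range (n + 1), s (k + 1) * fallFact x (n - k) m =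
      r (k + 1) * fallFact x (n - k) m + ((x - m * n + c) * (r k * fallFact x (n - k) m)
        - d * (t k * fallFact x (n - k) m)) - r k * fallFact x (n - k) m * (x - m * (n - k : ℤ)) :=
    fun k _ => by rw [hs]; ring
  rw [sum_range_succ', h0]
  simp only [Nat.add_sub_add_right, Nat.sub_zero]
  rw [sum_congr rfl hterm, sum_sub_distrib, sum_add_distrib, sum_sub_distrib, ← mul_sum, ← mul_sum]
  linear_combination hshift

noncomputable def rookSum (m : ℕ) (b : ℕ → ℕ) (n : ℕ) (x : ℤ) : ℤ :=
  ∑ k ∈ range (n + 1), (rkm m b n k : ℤ) * fallFact x (n - k) m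

theorem rookSum_succ {m n : ℕ} {b : ℕ → ℕ} {x : ℤ} (hm : 0 < m)
    (hb : MonotoneOn b (Set.Icc 1 (n + 1))) :
    rookSum m b (n + 1) x = (x + ↑(m * (b (n + 1) / m)) + m - m * n) * rookSum m b n x
      - (m - b (n + 1) % m : ℤ) * rookSum m (truncate b (m * (b (n + 1) / m))) n x := by
  rw [rookSum, sum_mul_fallFact_succ x m n (fun k => rkm m b n k) (fun k => rkm m b (n + 1) k)
    (fun k => rkm m (truncate b (m * (b (n + 1) / m))) n k) (↑(m * (b (n + 1) / m)) + m) _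
    (by simp only [rkm_zero]) (by simp only [rkm_eq_zero_of_lt n.lt_succ_self, Nat.cast_zero])
    (rkm_succ_succ hm hb), rookSum, rookSum]
  ring

def zoneFactor (m : ℕ) (b : ℕ → ℕ) (n : ℕ) (x : ℤ) (j : ℕ) : ℤ :=
  x + (m * (b j / m) : ℕ) - (m : ℤ) * ((j : ℤ) - 1) +
    (if j = n ∨ m * (b (j + 1) / m) ≠ m * (b j / m) then (zoneRem m b n j : ℤ) else 0)

def zoneProd (m : ℕ) (b : ℕ → ℕ) (n : ℕ) (x : ℤ) : ℤ := ∏ j ∈ Icc 1 n, zoneFactor m b n x j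

section Zones

variable {m : ℕ} {b : ℕ → ℕ} {n j : ℕ} {x : ℤ}

lemma min_mul_div_of_div_lt (hm : 0 < m) {a c : ℕ} (h : a / m < c / m) :
    min a (m * (c / m)) = a :=
  min_eq_left ((Nat.lt_mul_div_succ a hm).trans_le (Nat.mul_le_mul_left m h)).le

lemma min_mul_div_of_div_eq {a c : ℕ} (h : a / m = c / m) : min a (m * (c / m)) = m * (c / m) :=
  min_eq_right (h ▸ Nat.mul_div_le a m)

lemma div_le_div_of_monotoneOn {N i : ℕ} (hb : MonotoneOn b (Set.Icc 1 N)) (hi : 1 ≤ i)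
    (hij : i ≤ j) (hj : j ≤ N) : b i / m ≤ b j / m :=
  Nat.div_le_div_right (hb ⟨hi, by omega⟩ ⟨by omega, hj⟩ hij)

lemma truncate_div (hm : 0 < m) (hb : MonotoneOn b (Set.Icc 1 (n + 1))) (hj : j ∈ Icc 1 (n + 1)) :
    truncate b (m * (b (n + 1) / m)) j / m = b j / m := by
  rcases (div_le_div_of_monotoneOn hb (mem_Icc.1 hj).1 (mem_Icc.1 hj).2 le_rfl).lt_or_eq
    with h | h
  · rw [truncate, min_mul_div_of_div_lt hm h]
  · rw [truncate, min_mul_div_of_div_eq h, Nat.mul_div_cancel_left _ hm, h]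

lemma zoneRem_eq_sum (hm : 0 < m) :
    zoneRem m b n j = ∑ i ∈ Icc 1 n, if b i / m = b j / m then b i % m else 0 := by
  simp only [zoneRem, Nat.mul_left_cancel_iff hm]

lemma zoneRem_succ (hm : 0 < m) :
    zoneRem m b (n + 1) j =
      zoneRem m b n j + if b (n + 1) / m = b j / m then b (n + 1) % m else 0 := by
  rw [zoneRem_eq_sum hm, zoneRem_eq_sum hm, sum_Icc_succ_top (by omega)]

lemma zoneRem_congr (h : b j / m = b j' / m) : zoneRem m b n j = zoneRem m b n j' := by
  simp only [zoneRem, h]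

lemma zoneRem_truncate (hm : 0 < m) (hb : MonotoneOn b (Set.Icc 1 (n + 1)))
    (hj : j ∈ Icc 1 (n + 1)) :
    zoneRem m (truncate b (m * (b (n + 1) / m))) n j =
      if b j / m = b (n + 1) / m then 0 else zoneRem m b n j := by
  have hdiv : ∀ i ∈ Icc 1 n, truncate b (m * (b (n + 1) / m)) i / m = b i / m :=
    fun i hi => truncate_div hm hb (Icc_subset_Icc_right (by omega) hi)
  rw [zoneRem_eq_sum hm, zoneRem_eq_sum hm, truncate_div hm hb hj]
  split_ifs with hq
  · refine sum_eq_zero fun i hi => ?_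
    rw [hdiv i hi, hq]
    split_ifs with h
    · rw [truncate, min_mul_div_of_div_eq h, Nat.mul_mod_right]
    · rfl
  · refine sum_congr rfl fun i hi => ?_
    rw [hdiv i hi]
    split_ifs with h
    · have hle := div_le_div_of_monotoneOn (m := m) hb (mem_Icc.1 hi).1
        ((mem_Icc.1 hi).2.trans n.le_succ) le_rfl
      rw [truncate, min_mul_div_of_div_lt hm (lt_of_le_of_ne hle (h ▸ hq))]
    · rfl

lemma div_ne_div_last_of_zoneEnd (hb : MonotoneOn b (Set.Icc 1 (n + 1))) (hj : j ∈ Icc 1 n)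
    (hjn : j = n → b n / m ≠ b (n + 1) / m) (hend : j = n ∨ b (j + 1) / m ≠ b j / m) :
    b j / m ≠ b (n + 1) / m := by
  obtain ⟨hj1, hjn'⟩ := mem_Icc.1 hj
  rcases hend with rfl | hend
  · exact hjn rfl
  · have h1 := div_le_div_of_monotoneOn (m := m) hb hj1 (by omega : j ≤ j + 1) (by omega)
    have h2 := div_le_div_of_monotoneOn (m := m) hb (by omega) (by omega : j + 1 ≤ n + 1) le_rfl
    omega

lemma zoneFactor_succ (hm : 0 < m) (hb : MonotoneOn b (Set.Icc 1 (n + 1))) (hj : j ∈ Icc 1 n)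
    (hjn : j = n → b n / m ≠ b (n + 1) / m) :
    zoneFactor m b (n + 1) x j = zoneFactor m b n x j := by
  simp only [zoneFactor, ne_eq, Nat.mul_left_cancel_iff hm]
  congr 1
  by_cases hend : j = n ∨ b (j + 1) / m ≠ b j / m
  · have hne := div_ne_div_last_of_zoneEnd hb hj hjn hend
    have hend' : j = n + 1 ∨ b (j + 1) / m ≠ b j / m :=
      Or.inr (hend.elim (fun h => h ▸ hne.symm) id)
    rw [if_pos hend, if_pos hend', zoneRem_succ hm, if_neg hne.symm, add_zero]
  · have hend' : ¬(j = n + 1 ∨ b (j + 1) / m ≠ b j / m) := by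
      have := (mem_Icc.1 hj).2
      rintro (h | h)
      exacts [by omega, hend (Or.inr h)]
    rw [if_neg hend, if_neg hend']

lemma zoneFactor_truncate (hm : 0 < m) (hb : MonotoneOn b (Set.Icc 1 (n + 1)))
    (hj : j ∈ Icc 1 n) (hjn : j = n → b n / m ≠ b (n + 1) / m) :
    zoneFactor m (truncate b (m * (b (n + 1) / m))) n x j = zoneFactor m b n x j := by
  have hj' := mem_Icc.1 hj
  simp only [zoneFactor, ne_eq, Nat.mul_left_cancel_iff hm,
    truncate_div hm hb (mem_Icc.2 ⟨hj'.1, by omega⟩),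
    truncate_div hm hb (mem_Icc.2 ⟨(by omega : 1 ≤ j + 1), by omega⟩)]
  split_ifs with hend
  · rw [zoneRem_truncate hm hb (mem_Icc.2 ⟨hj'.1, by omega⟩),
      if_neg (div_ne_div_last_of_zoneEnd hb hj hjn hend)]
  · rfl

lemma zoneFactor_last (hm : 0 < m) :
    zoneFactor m b (n + 1) x (n + 1) =
      x + ↑(m * (b (n + 1) / m)) - m * n + zoneRem m b n (n + 1) + ↑(b (n + 1) % m) := by
  rw [zoneFactor, if_pos (Or.inl rfl), zoneRem_succ hm, if_pos rfl]
  push_cast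
  ring

lemma zoneProd_succ_of_forall_div_ne (hm : 0 < m) (hb : MonotoneOn b (Set.Icc 1 (n + 1)))
    (hsep : ∀ j ∈ Icc 1 n, b j / m ≠ b (n + 1) / m) :
    zoneProd m b (n + 1) x = (x + ↑(m * (b (n + 1) / m)) + m - m * n) * zoneProd m b n x
      - (m - b (n + 1) % m : ℤ) * zoneProd m (truncate b (m * (b (n + 1) / m))) n x := by
  have hjn : ∀ j ∈ Icc 1 n, j = n → b n / m ≠ b (n + 1) / m := fun j hj h => h ▸ hsep j hj
  have hrem : zoneRem m b n (n + 1) = 0 := by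
    rw [zoneRem_eq_sum hm]
    exact sum_eq_zero fun i hi => if_neg (hsep i hi)
  rw [zoneProd, prod_Icc_succ_top (Nat.le_add_left 1 n), zoneFactor_last hm, hrem,
    prod_congr rfl fun j hj => zoneFactor_succ hm hb hj (hjn j hj), zoneProd, zoneProd,
    prod_congr rfl fun j hj => zoneFactor_truncate (x := x) hm hb hj (hjn j hj)]
  push_cast
  ring

lemma zoneProd_succ_succ_of_div_eq (hm : 0 < m) (hb : MonotoneOn b (Set.Icc 1 (n + 2)))
    (hq : b (n + 1) / m = b (n + 2) / m) :
    zoneProd m b (n + 2) x = (x + ↑(m * (b (n + 2) / m)) + m - m * ↑(n + 1)) *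
        zoneProd m b (n + 1) x
      - (m - b (n + 2) % m : ℤ) * zoneProd m (truncate b (m * (b (n + 2) / m))) (n + 1) x := by
  have hjn : ∀ j ∈ Icc 1 n, j = n + 1 → b (n + 1) / m ≠ b (n + 2) / m :=
    fun j hj h => absurd h (by have := (mem_Icc.1 hj).2; omega)
  have hinner : zoneFactor m b (n + 2) x (n + 1) = x + ↑(m * (b (n + 2) / m)) - m * n := by
    rw [zoneFactor, if_neg (by simp [hq]), hq]
    push_cast
    ring
  have hprev : zoneFactor m b (n + 1) x (n + 1) =
      x + ↑(m * (b (n + 2) / m)) - m * n + zoneRem m b (n + 1) (n + 1) := by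
    rw [zoneFactor, if_pos (Or.inl rfl), hq]
    push_cast
    ring
  have htrunc : zoneFactor m (truncate b (m * (b (n + 2) / m))) (n + 1) x (n + 1) =
      x + ↑(m * (b (n + 2) / m)) - m * n := by
    rw [zoneFactor, if_pos (Or.inl rfl), truncate_div hm hb (mem_Icc.2 ⟨by omega, by omega⟩),
      zoneRem_truncate hm hb (mem_Icc.2 ⟨by omega, by omega⟩), if_pos hq, hq]
    push_cast
    ring
  simp only [zoneProd, prod_Icc_succ_top (Nat.le_add_left 1 _)]
  rw [prod_congr rfl fun j hj => zoneFactor_succ hm hb (Icc_subset_Icc_right n.le_succ hj)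
      (hjn j hj),
    prod_congr rfl fun j hj => zoneFactor_truncate (x := x) hm hb
      (Icc_subset_Icc_right n.le_succ hj) (hjn j hj),
    hinner, hprev, htrunc, zoneFactor_last hm, zoneRem_congr hq.symm]
  push_cast
  ring

theorem zoneProd_succ (hm : 0 < m) (hb : MonotoneOn b (Set.Icc 1 (n + 1))) :
    zoneProd m b (n + 1) x = (x + ↑(m * (b (n + 1) / m)) + m - m * n) * zoneProd m b n x
      - (m - b (n + 1) % m : ℤ) * zoneProd m (truncate b (m * (b (n + 1) / m))) n x := by
  by_cases hsep : ∀ j ∈ Icc 1 n, b j / m ≠ b (n + 1) / m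
  · exact zoneProd_succ_of_forall_div_ne hm hb hsep
  · push Not at hsep
    obtain ⟨j, hj, hjq⟩ := hsep
    obtain ⟨hj1, hjn⟩ := mem_Icc.1 hj
    obtain ⟨n, rfl⟩ : ∃ n', n = n' + 1 := ⟨n - 1, by omega⟩
    have h1 := div_le_div_of_monotoneOn (m := m) hb hj1 hjn (by omega)
    have h2 := div_le_div_of_monotoneOn (m := m) hb (by omega) (n + 1).le_succ le_rfl
    exact zoneProd_succ_succ_of_div_eq hm hb (h2.antisymm (hjq.symm.trans_le h1))

end Zones

theorem rookSum_eq_zoneProd {m n : ℕ} (hm : 0 < m) (x : ℤ) :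
    ∀ {b : ℕ → ℕ}, MonotoneOn b (Set.Icc 1 n) → rookSum m b n x = zoneProd m b n x := by
  induction n with
  | zero => intro b _; simp [rookSum, zoneProd, rkm_zero, fallFact]
  | succ n ih =>
    intro b hb
    have hb' := hb.mono (Set.Icc_subset_Icc_right n.le_succ)
    rw [rookSum_succ hm hb, zoneProd_succ hm hb, ih hb', ih (hb'.truncate _)]

/-- The m-Factorization Theorem (Theorem 2.3): for any Ferrers board
`B = (b_1,…,b_n)` and any positive integer `m`,
`∑_k r_{k,m}(B) x↓_{n-k,m} = ∏_j F_j` where `F_j = x + ⌊b_j⌋_m − (j−1)m + ρ_m(z)` if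
`j` is the last index of its zone `z` and `F_j = x + ⌊b_j⌋_m − (j−1)m` otherwise. -/
theorem m_factorization (m n : ℕ) (hm : 0 < m) (b : ℕ → ℕ)
    (hmono : ∀ j k, 1 ≤ j → j ≤ k → k ≤ n → b j ≤ b k) (x : ℤ) :
    ∑ k ∈ Finset.range (n + 1), (rkm m b n k : ℤ) * fallFact x (n - k) m =
      ∏ j ∈ Finset.Icc 1 n,
        (x + (m * (b j / m) : ℕ) - (m : ℤ) * ((j : ℤ) - 1) +
          (if j = n ∨ m * (b (j + 1) / m) ≠ m * (b j / m) then (zoneRem m b n j : ℤ) else 0)) :=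
  rookSum_eq_zoneProd hm x fun j hj k hk hjk => hmono j k hj.1 hjk hk.2
end

section
/- For m = 1 and any Ferrers board B = (b_1,...,b_n), the sum over k from 0 to n of r_k(B) · x(x−1)···(x−(n−k)+1) equals the product over j from 1 to n of (x + b_j − j + 1). -/
/-- A rook placement: cells of the board, no two in the same column, no two in the
same row. -/
def IsRookPlacement (b : ℕ → ℕ) (n : ℕ) (P : Finset (ℕ × ℕ)) : Prop :=
  (∀ c ∈ P, IsCell b n c) ∧
  (∀ c ∈ P, ∀ c' ∈ P, c.2 = c'.2 → c = c') ∧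
  (∀ c ∈ P, ∀ c' ∈ P, c.1 = c'.1 → c = c')

/-- `r_k(B)`: the number of rook placements with `k` rooks. -/
noncomputable def rk (b : ℕ → ℕ) (n k : ℕ) : ℕ :=
  Nat.card {P : Finset (ℕ × ℕ) // IsRookPlacement b n P ∧ P.card = k}

/-! Deleting the last column of a Ferrers board `B` leaves a board `B'`, and a placement of `k + 1`
rooks on `B` either avoids that column or is a placement of `k` rooks on `B'` plus a rook in one of
the `b_n - k` rows of the last column that those `k` rooks leave free (they all lie in rows
`≤ b_n` because the column heights increase); hence `r_{k+1}(B) = r_{k+1}(B') + (b_n - k) r_k(B')`.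
Since `x↓(n - k) = x↓(n - 1 - k) (x - (n - 1 - k))`, this recurrence says exactly that the sum for
`B` is `(x + b_n - n + 1)` times the sum for `B'`, and the product formula follows by induction
on `n`. -/

open Finset

theorem fallFact_one_succ (x : ℤ) (j : ℕ) : fallFact x (j + 1) 1 = fallFact x j 1 * (x - j) := by
  simp only [fallFact, prod_range_succ, Nat.cast_one, one_mul]

theorem Finset.filter_snd_ne_insert {P : Finset (ℕ × ℕ)} {i j : ℕ} (hP : ∀ c ∈ P, c.2 ≠ j) :
    (insert (i, j) P).filter (fun c => c.2 ≠ j) = P := by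
  rw [filter_insert, if_neg (by simp)]
  exact filter_true_of_mem hP

namespace IsRookPlacement

variable {b : ℕ → ℕ} {n : ℕ} {P : Finset (ℕ × ℕ)}

theorem subset {Q : Finset (ℕ × ℕ)} (hP : IsRookPlacement b n P) (hQ : Q ⊆ P) :
    IsRookPlacement b n Q :=
  ⟨fun c hc => hP.1 c (hQ hc), fun c hc c' hc' => hP.2.1 c (hQ hc) c' (hQ hc'),
    fun c hc c' hc' => hP.2.2 c (hQ hc) c' (hQ hc')⟩

theorem card_le (hP : IsRookPlacement b n P) : P.card ≤ n := by
  calc P.card = (P.image Prod.snd).card :=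
        (card_image_of_injOn fun c hc c' hc' h => hP.2.1 c hc c' hc' h).symm
    _ ≤ (Icc 1 n).card := card_le_card fun j hj => by
        obtain ⟨c, hc, rfl⟩ := mem_image.mp hj
        exact mem_Icc.mpr ⟨(hP.1 c hc).1, (hP.1 c hc).2.1⟩
    _ = n := by simp

theorem card_image_fst (hP : IsRookPlacement b n P) : (P.image Prod.fst).card = P.card :=
  card_image_of_injOn fun c hc c' hc' h => hP.2.2 c hc c' hc' h

theorem image_fst_subset {h : ℕ} (hP : IsRookPlacement b n P)
    (hb : ∀ j, 1 ≤ j → j ≤ n → b j ≤ h) : P.image Prod.fst ⊆ Icc 1 h := by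
  intro i hi
  obtain ⟨c, hc, rfl⟩ := mem_image.mp hi
  obtain ⟨h1, h2, h3, h4⟩ := hP.1 c hc
  exact mem_Icc.mpr ⟨h3, h4.trans (hb c.2 h1 h2)⟩

theorem card_Icc_sdiff_image_fst {h : ℕ} (hP : IsRookPlacement b n P)
    (hb : ∀ j, 1 ≤ j → j ≤ n → b j ≤ h) :
    ((Icc 1 h \ P.image Prod.fst).card : ℤ) = h - P.card := by
  have hsub := hP.image_fst_subset hb
  have hle := card_le_card hsub
  rw [Nat.card_Icc, hP.card_image_fst] at hle
  rw [card_sdiff_of_subset hsub, Nat.card_Icc, hP.card_image_fst]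
  omega

theorem snd_ne_succ (hP : IsRookPlacement b n P) : ∀ c ∈ P, c.2 ≠ n + 1 :=
  fun c hc => by have := (hP.1 c hc).2.1; omega

theorem of_forall_snd_ne (hP : IsRookPlacement b (n + 1) P) (hcol : ∀ c ∈ P, c.2 ≠ n + 1) :
    IsRookPlacement b n P := by
  refine ⟨fun c hc => ?_, hP.2.1, hP.2.2⟩
  obtain ⟨h1, h2, h3, h4⟩ := hP.1 c hc
  exact ⟨h1, by have := hcol c hc; omega, h3, h4⟩

theorem succ (hP : IsRookPlacement b n P) : IsRookPlacement b (n + 1) P := by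
  refine ⟨fun c hc => ?_, hP.2.1, hP.2.2⟩
  obtain ⟨h1, h2, h3, h4⟩ := hP.1 c hc
  exact ⟨h1, by omega, h3, h4⟩

theorem filter_snd_ne (hP : IsRookPlacement b (n + 1) P) :
    IsRookPlacement b n (P.filter fun c => c.2 ≠ n + 1) :=
  (hP.subset (filter_subset _ _)).of_forall_snd_ne fun _ hc => (mem_filter.mp hc).2

theorem insert_of_mem_sdiff (hP : IsRookPlacement b n P) {i : ℕ}
    (hi : i ∈ Icc 1 (b (n + 1)) \ P.image Prod.fst) :
    IsRookPlacement b (n + 1) (insert (i, n + 1) P) := by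
  obtain ⟨hi, hrow⟩ := mem_sdiff.mp hi
  have hrow : ∀ c ∈ P, c.1 ≠ i := fun c hc h => hrow (mem_image.mpr ⟨c, hc, h⟩)
  have hcol := hP.snd_ne_succ
  refine ⟨?_, ?_, ?_⟩
  · intro c hc
    rcases mem_insert.mp hc with rfl | hc
    · exact ⟨by omega, le_rfl, (mem_Icc.mp hi).1, (mem_Icc.mp hi).2⟩
    · exact hP.succ.1 c hc
  · intro c hc c' hc' h
    rcases mem_insert.mp hc with rfl | hc <;> rcases mem_insert.mp hc' with rfl | hc'
    · rfl
    · exact absurd h.symm (hcol c' hc')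
    · exact absurd h (hcol c hc)
    · exact hP.2.1 c hc c' hc' h
  · intro c hc c' hc' h
    rcases mem_insert.mp hc with rfl | hc <;> rcases mem_insert.mp hc' with rfl | hc'
    · rfl
    · exact absurd h.symm (hrow c' hc')
    · exact absurd h (hrow c hc)
    · exact hP.2.2 c hc c' hc' h

theorem insert_filter_snd_ne (hP : IsRookPlacement b (n + 1) P) {c : ℕ × ℕ} (hc : c ∈ P)
    (hc2 : c.2 = n + 1) : insert c (P.filter fun c => c.2 ≠ n + 1) = P := by
  ext d
  rw [mem_insert, mem_filter]
  constructor
  · rintro (rfl | ⟨hd, -⟩) <;> assumption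
  · intro hd
    by_cases hd2 : d.2 = n + 1
    · exact Or.inl (hP.2.1 d hd c hc (hd2.trans hc2.symm))
    · exact Or.inr ⟨hd, hd2⟩

end IsRookPlacement

namespace Ferrers

def board (b : ℕ → ℕ) (n : ℕ) : Finset (ℕ × ℕ) :=
  (Icc 1 n).biUnion fun j => Icc 1 (b j) ×ˢ {j}

open Classical in
noncomputable def placements (b : ℕ → ℕ) (n k : ℕ) : Finset (Finset (ℕ × ℕ)) :=
  (board b n).powerset.filter fun P => IsRookPlacement b n P ∧ P.card = k

variable {b : ℕ → ℕ} {n : ℕ}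

theorem mem_board {c : ℕ × ℕ} : c ∈ board b n ↔ IsCell b n c := by
  obtain ⟨i, j⟩ := c
  simp only [board, mem_biUnion, mem_product, mem_Icc, mem_singleton, IsCell]
  constructor
  · rintro ⟨j', ⟨h1, h2⟩, ⟨h3, h4⟩, rfl⟩
    exact ⟨h1, h2, h3, h4⟩
  · rintro ⟨h1, h2, h3, h4⟩
    exact ⟨j, ⟨h1, h2⟩, ⟨h3, h4⟩, rfl⟩

theorem mem_placements {k : ℕ} {P : Finset (ℕ × ℕ)} :
    P ∈ placements b n k ↔ IsRookPlacement b n P ∧ P.card = k := by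
  classical
  rw [placements, mem_filter, mem_powerset, and_iff_right_iff_imp]
  exact fun h c hc => mem_board.mpr (h.1.1 c hc)

theorem rk_eq_card_placements (b : ℕ → ℕ) (n k : ℕ) : rk b n k = (placements b n k).card :=
  Nat.subtype_card _ fun _ => mem_placements

theorem rk_zero : rk b n 0 = 1 := by
  rw [rk_eq_card_placements, card_eq_one]
  refine ⟨∅, eq_singleton_iff_unique_mem.mpr ⟨mem_placements.mpr ⟨?_, card_empty⟩, ?_⟩⟩
  · exact ⟨by simp, by simp, by simp⟩
  · exact fun P hP => card_eq_zero.mp (mem_placements.mp hP).2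

theorem rk_eq_zero_of_lt {k : ℕ} (h : n < k) : rk b n k = 0 := by
  rw [rk_eq_card_placements, card_eq_zero, eq_empty_iff_forall_notMem]
  intro P hPk
  obtain ⟨hP, rfl⟩ := mem_placements.mp hPk
  exact absurd hP.card_le (by omega)

variable {m k : ℕ}

theorem filter_not_exists_snd_eq_placements :
    (placements b (m + 1) k).filter (fun P => ¬∃ c ∈ P, c.2 = m + 1) = placements b m k := by
  ext P
  simp only [mem_filter, mem_placements, not_exists, not_and]
  constructor
  · rintro ⟨⟨hP, hk⟩, hcol⟩
    exact ⟨hP.of_forall_snd_ne hcol, hk⟩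
  · rintro ⟨hP, hk⟩
    exact ⟨⟨hP.succ, hk⟩, hP.snd_ne_succ⟩

theorem card_sigma_eq_card_filter_exists_snd_eq :
    ((placements b m k).sigma fun P => Icc 1 (b (m + 1)) \ P.image Prod.fst).card =
      ((placements b (m + 1) (k + 1)).filter fun P => ∃ c ∈ P, c.2 = m + 1).card := by
  classical
  refine card_bij (fun p _ => insert (p.2, m + 1) p.1) ?_ ?_ ?_
  · rintro ⟨P, i⟩ hp
    obtain ⟨hPk, hi⟩ := mem_sigma.mp hp
    obtain ⟨hP, rfl⟩ := mem_placements.mp hPk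
    refine mem_filter.mpr ⟨mem_placements.mpr ⟨hP.insert_of_mem_sdiff hi, ?_⟩,
      _, mem_insert_self _ _, rfl⟩
    exact card_insert_of_notMem fun h => hP.snd_ne_succ _ h rfl
  · rintro ⟨P, i⟩ hp ⟨Q, i'⟩ hq hPQ
    have hP : IsRookPlacement b m P := (mem_placements.mp (mem_sigma.mp hp).1).1
    have hQ : IsRookPlacement b m Q := (mem_placements.mp (mem_sigma.mp hq).1).1
    have hPQ : insert (i, m + 1) P = insert (i', m + 1) Q := hPQ
    obtain rfl : P = Q := by
      rw [← filter_snd_ne_insert hP.snd_ne_succ (i := i),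
        ← filter_snd_ne_insert hQ.snd_ne_succ (i := i'), hPQ]
    have hi : (i, m + 1) ∈ insert (i', m + 1) P := hPQ ▸ mem_insert_self _ _
    rcases mem_insert.mp hi with h | h
    · rw [(Prod.mk.inj h).1]
    · exact absurd rfl (hP.snd_ne_succ _ h)
  · intro P hP
    obtain ⟨⟨hP', hk⟩, c, hc, hc2⟩ := (mem_filter.mp hP).imp_left mem_placements.mp
    have hins := hP'.insert_filter_snd_ne hc hc2
    refine ⟨⟨P.filter fun c => c.2 ≠ m + 1, c.1⟩, mem_sigma.mpr ⟨?_, ?_⟩, ?_⟩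
    · refine mem_placements.mpr ⟨hP'.filter_snd_ne, ?_⟩
      have := card_insert_of_notMem (s := P.filter fun c => c.2 ≠ m + 1) (a := c)
        (by simp [hc2])
      rw [hins] at this
      dsimp only
      omega
    · obtain ⟨-, -, h1, h2⟩ := hP'.1 c hc
      refine mem_sdiff.mpr ⟨mem_Icc.mpr ⟨h1, hc2 ▸ h2⟩, fun h => ?_⟩
      obtain ⟨d, hd, hd1⟩ := mem_image.mp h
      obtain ⟨hdP, hd2⟩ := mem_filter.mp hd
      exact hd2 (hP'.2.2 d hdP c hc hd1 ▸ hc2)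
    · simpa only [← hc2] using hins

theorem card_filter_exists_snd_eq_placements (hb : ∀ j, 1 ≤ j → j ≤ m → b j ≤ b (m + 1)) :
    (((placements b (m + 1) (k + 1)).filter fun P => ∃ c ∈ P, c.2 = m + 1).card : ℤ) =
      ((b (m + 1) : ℤ) - k) * rk b m k := by
  have hfree : ∀ P ∈ placements b m k,
      ((Icc 1 (b (m + 1)) \ P.image Prod.fst).card : ℤ) = b (m + 1) - k := by
    intro P hPk
    obtain ⟨hP, rfl⟩ := mem_placements.mp hPk
    exact hP.card_Icc_sdiff_image_fst hb
  rw [← card_sigma_eq_card_filter_exists_snd_eq, card_sigma, Nat.cast_sum, sum_congr rfl hfree,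
    sum_const, nsmul_eq_mul, rk_eq_card_placements, mul_comm]

theorem rk_succ_succ (hb : ∀ j, 1 ≤ j → j ≤ m → b j ≤ b (m + 1)) :
    (rk b (m + 1) (k + 1) : ℤ) = rk b m (k + 1) + ((b (m + 1) : ℤ) - k) * rk b m k := by
  rw [rk_eq_card_placements b (m + 1), ← card_filter_add_card_filter_not
    (fun P => ∃ c ∈ P, c.2 = m + 1), Nat.cast_add, card_filter_exists_snd_eq_placements hb,
    filter_not_exists_snd_eq_placements, ← rk_eq_card_placements, add_comm]

theorem sum_rk_mul_fallFact_succ (hb : ∀ j, 1 ≤ j → j ≤ n → b j ≤ b (n + 1)) (x : ℤ) :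
    ∑ k ∈ range (n + 2), (rk b (n + 1) k : ℤ) * fallFact x (n + 1 - k) 1 =
      (x + b (n + 1) - n) * ∑ k ∈ range (n + 1), (rk b n k : ℤ) * fallFact x (n - k) 1 := by
  calc ∑ k ∈ range (n + 2), (rk b (n + 1) k : ℤ) * fallFact x (n + 1 - k) 1
      = ∑ k ∈ range (n + 2), (rk b n k : ℤ) * fallFact x (n + 1 - k) 1 +
          ∑ k ∈ range (n + 1), ((b (n + 1) : ℤ) - k) * rk b n k * fallFact x (n - k) 1 := by
        rw [sum_range_succ' _ (n + 1), sum_range_succ' _ (n + 1)]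
        simp only [rk_zero, rk_succ_succ hb, Nat.add_sub_add_right, add_mul, sum_add_distrib]
        ring
    _ = ∑ k ∈ range (n + 1), (rk b n k : ℤ) * fallFact x (n + 1 - k) 1 +
          ∑ k ∈ range (n + 1), ((b (n + 1) : ℤ) - k) * rk b n k * fallFact x (n - k) 1 := by
        rw [sum_range_succ _ (n + 1), rk_eq_zero_of_lt (Nat.lt_succ_self n), Nat.cast_zero,
          zero_mul, add_zero]
    _ = ∑ k ∈ range (n + 1), (x + b (n + 1) - n) * ((rk b n k : ℤ) * fallFact x (n - k) 1) := by
        rw [← sum_add_distrib]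
        refine sum_congr rfl fun k hk => ?_
        have hk : k ≤ n := Nat.lt_succ_iff.mp (mem_range.mp hk)
        rw [Nat.sub_add_comm hk, fallFact_one_succ, Nat.cast_sub hk]
        ring
    _ = _ := (mul_sum _ _ _).symm

end Ferrers

/-- The Goldman–Joichi–White Factorization Theorem: for any Ferrers board
`B = (b_1,…,b_n)`, `∑_k r_k(B) x↓_{n-k} = ∏_{j=1}^n (x + b_j − j + 1)`. -/
theorem factorization_theorem (n : ℕ) (b : ℕ → ℕ)
    (hmono : ∀ j k, 1 ≤ j → j ≤ k → k ≤ n → b j ≤ b k) (x : ℤ) :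
    ∑ k ∈ Finset.range (n + 1), (rk b n k : ℤ) * fallFact x (n - k) 1 =
      ∏ j ∈ Finset.Icc 1 n, (x + (b j : ℤ) - (j : ℤ) + 1) := by
  induction n with
  | zero => simp [Ferrers.rk_zero, fallFact]
  | succ n ih =>
    rw [Ferrers.sum_rk_mul_fallFact_succ (fun j h1 h2 => hmono j (n + 1) h1 (by omega) le_rfl),
      ih (fun j k h1 h2 h3 => hmono j k h1 h2 (by omega)), prod_Icc_succ_top (by omega)]
    push_cast
    ring
end

section
/- Let ζ = (a_1,...,a_n) be an integer vector with a_1 = 0, and define b_j = (j−1)m − a_j. Then B = (b_1,...,b_n) is a singleton Ferrers board with ζ_m(B) = ζ if and only if (i) a_{j+1} ≤ a_j + m for all 1 ≤ j < n, and (ii) whenever neither a_{j+1} nor a_j is a multiple of m, ⌊a_{j+1}⌋_m ≤ ⌊a_j⌋_m. -/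
/-- `⌊x⌋_m`: the largest multiple of `m` at most `x` (floor division). -/
def mfloorZ (m : ℕ) (x : ℤ) : ℤ := (m : ℤ) * Int.fdiv x m

/-!
Since `(j-1)m` is a multiple of `m`, the board `b_j = (j-1)m - a_j` is weakly increasing exactly
when (i) holds, and nonnegativity then follows from `a_1 = 0` by summing (i). Reflecting about a
multiple `c` of `m` sends `⌊x⌋_m` to `c - ⌊x⌋_m - m` when `m ∤ x`, so the singleton condition at `j`
reads `⌊a_{j+1}⌋_m < ⌊a_j⌋_m + m`, i.e. (ii), when `m ∤ a_{j+1}`, and is implied by (i) when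
`m ∣ a_{j+1}`.
-/

theorem mfloorZ_eq_sub_emod (m : ℕ) (x : ℤ) : mfloorZ m x = x - x % m := by
  rw [mfloorZ, Int.fdiv_eq_ediv_of_nonneg x (Int.natCast_nonneg m), Int.emod_def]
  ring

theorem mfloorZ_of_dvd {m : ℕ} {x : ℤ} (hx : (m : ℤ) ∣ x) : mfloorZ m x = x := by
  rw [mfloorZ_eq_sub_emod, Int.emod_eq_zero_of_dvd hx, sub_zero]

theorem lt_mfloorZ_add {m : ℕ} (hm : 0 < m) (x : ℤ) : x < mfloorZ m x + m := by
  have := Int.emod_lt_of_pos x (Int.natCast_pos.2 hm)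
  rw [mfloorZ_eq_sub_emod]
  linarith

theorem mfloorZ_lt_mfloorZ_add_iff {m : ℕ} (hm : 0 < m) (x y : ℤ) :
    mfloorZ m y < mfloorZ m x + m ↔ mfloorZ m y ≤ mfloorZ m x := by
  have hm' : (0 : ℤ) < m := Int.natCast_pos.2 hm
  simp only [mfloorZ]
  rw [← mul_add_one, mul_lt_mul_iff_right₀ hm', mul_le_mul_iff_right₀ hm', Int.lt_add_one_iff]

theorem mfloorZ_sub_of_not_dvd {m : ℕ} {c x : ℤ} (hc : (m : ℤ) ∣ c) (hx : ¬ (m : ℤ) ∣ x) :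
    mfloorZ m (c - x) = c - mfloorZ m x - m := by
  obtain ⟨k, rfl⟩ := hc
  have hmod : (m * k - x) % m = (-x) % m := by
    rw [sub_eq_neg_add, Int.add_mul_emod_self_left]
  simp only [mfloorZ_eq_sub_emod, hmod, Int.neg_emod, hx, if_false, Int.natAbs_natCast]
  ring

theorem le_add_mul_of_forall_le_add {m : ℤ} {n : ℕ} {a : ℕ → ℤ}
    (h : ∀ j, 1 ≤ j → j < n → a (j + 1) ≤ a j + m) {j : ℕ} (hj : 1 ≤ j) (hjn : j ≤ n) :
    a j ≤ a 1 + m * ((j : ℤ) - 1) := by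
  induction j, hj using Nat.le_induction with
  | base => simp
  | succ k hk ih =>
    have hstep := h k hk (by omega)
    have hk_bound := ih (by omega)
    push_cast
    linarith

theorem singleton_step_iff {m : ℕ} (hm : 0 < m) {c x y : ℤ} (hc : (m : ℤ) ∣ c)
    (hyx : y ≤ x + m) :
    (¬ (m : ℤ) ∣ c - x → mfloorZ m (c - x) < mfloorZ m (c + m - y)) ↔
      (¬ (m : ℤ) ∣ y → ¬ (m : ℤ) ∣ x → mfloorZ m y ≤ mfloorZ m x) := by
  have hc' : (m : ℤ) ∣ c + m := dvd_add hc dvd_rfl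
  rw [dvd_sub_right hc]
  by_cases hx : (m : ℤ) ∣ x
  · simp only [hx, not_true_eq_false, IsEmpty.forall_iff, imp_true_iff]
  simp only [hx, not_false_eq_true, forall_const, mfloorZ_sub_of_not_dvd hc hx]
  by_cases hy : (m : ℤ) ∣ y
  · have hx_lt := lt_mfloorZ_add hm x
    simp only [hy, not_true_eq_false, IsEmpty.forall_iff, iff_true,
      mfloorZ_of_dvd (dvd_sub hc' hy)]
    linarith
  · simp only [hy, not_false_eq_true, forall_const, mfloorZ_sub_of_not_dvd hc' hy,
      ← mfloorZ_lt_mfloorZ_add_iff hm x y]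
    constructor <;> intro h <;> linarith

/-- Proposition 4.3: Let `ζ = (a_1,…,a_n)` with `a_1 = 0` and set
`b_j = (j−1)m − a_j`.  Then `B = (b_1,…,b_n)` is a singleton Ferrers board
(nonnegative, weakly increasing, singleton condition) if and only if
(i) `a_{j+1} ≤ a_j + m` for all `j`, and (ii) whenever neither `a_{j+1}` nor `a_j`
is a multiple of `m`, `⌊a_{j+1}⌋_m ≤ ⌊a_j⌋_m`. -/
theorem singleton_root_vector_characterization (m n : ℕ) (hm : 0 < m)
    (a : ℕ → ℤ) (ha : a 1 = 0) (b : ℕ → ℤ)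
    (hb : b = fun j : ℕ => (m : ℤ) * ((j : ℤ) - 1) - a j) :
    ((∀ j, 1 ≤ j → j ≤ n → 0 ≤ b j) ∧
     (∀ j, 1 ≤ j → j < n → b j ≤ b (j + 1)) ∧
     (∀ j, 1 ≤ j → j < n → ¬ ((m : ℤ) ∣ b j) → mfloorZ m (b j) < mfloorZ m (b (j + 1)))) ↔
    ((∀ j, 1 ≤ j → j < n → a (j + 1) ≤ a j + m) ∧
     (∀ j, 1 ≤ j → j < n → ¬ ((m : ℤ) ∣ a (j + 1)) → ¬ ((m : ℤ) ∣ a j) →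
        mfloorZ m (a (j + 1)) ≤ mfloorZ m (a j))) := by
  have hb_succ (j : ℕ) : b (j + 1) = m * ((j : ℤ) - 1) + m - a (j + 1) := by
    rw [hb]; push_cast; ring
  have hb_self (j : ℕ) : b j = m * ((j : ℤ) - 1) - a j := by rw [hb]
  have hc (j : ℕ) : (m : ℤ) ∣ m * ((j : ℤ) - 1) := dvd_mul_right _ _
  have mono_iff (j : ℕ) : b j ≤ b (j + 1) ↔ a (j + 1) ≤ a j + m := by
    rw [hb_self, hb_succ]; constructor <;> intro h <;> linarith
  constructor
  · rintro ⟨-, hmono, hsing⟩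
    have hstep j hj hjn := (mono_iff j).1 (hmono j hj hjn)
    refine ⟨hstep, fun j hj hjn => (singleton_step_iff hm (hc j) (hstep j hj hjn)).1 ?_⟩
    rw [← hb_self, ← hb_succ]
    exact hsing j hj hjn
  · rintro ⟨hstep, hfloor⟩
    refine ⟨fun j hj hjn => ?_, fun j hj hjn => (mono_iff j).2 (hstep j hj hjn),
      fun j hj hjn => ?_⟩
    · linarith [hb_self j, le_add_mul_of_forall_le_add hstep hj hjn]
    · rw [hb_succ, hb_self]
      exact (singleton_step_iff hm (hc j) (hstep j hj hjn)).2 (hfloor j hj hjn)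
end

section
/- For any Ferrers board B = (b_1,...,b_n) and positive integer m, the sum over k from 0 to n of f_{k,m}(B) · x↓_{n-k,m} equals the product over j from 1 to n of (x + b_j − (j−1)m), as polynomials in x. -/
/-- The cells of the Ferrers board with column heights `b 1, …, b n`
(cells are pairs `(row, column)`, 1-indexed). -/
def cells (b : ℕ → ℕ) (n : ℕ) : Finset (ℕ × ℕ) :=
  ((Finset.Icc 1 ((Finset.Icc 1 n).sup b)) ×ˢ Finset.Icc 1 n).filter fun c => c.1 ≤ b c.2

/-- The `m`-weight of a file placement: `∏_i 1↓_{y_i,m}` where `y_i` is the number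
of rooks in row `i`. -/
def wtm (m : ℕ) (F : Finset (ℕ × ℕ)) : ℤ :=
  ∏ i ∈ F.image Prod.fst, fallFact 1 ((F.filter fun c => c.1 = i).card) m

/-- `f_{k,m}(B)`: the sum of `m`-weights over all file placements (no two rooks in
the same column) of `k` rooks on the board. -/
def fkm (m : ℕ) (b : ℕ → ℕ) (n k : ℕ) : ℤ :=
  ∑ F ∈ (cells b n).powerset.filter
      (fun F => (∀ c ∈ F, ∀ c' ∈ F, c.2 = c'.2 → c = c') ∧ F.card = k),
    wtm m F

/-!
Deleting the last column gives the recurrence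
`f_{k+1}(b_1,…,b_{n+1}) = f_{k+1}(b_1,…,b_n) + (b_{n+1} − mk) f_k(b_1,…,b_n)`:
a placement either avoids column `n+1`, or is a placement `F` of `k` rooks on the first `n`
columns plus a rook in some row `i ≤ b_{n+1}` of column `n+1`, which multiplies the weight
by `1 − m y_i(F)`. As the board is Ferrers, every rook of `F` lies in a row `≤ b_{n+1}`, so
these factors sum to `b_{n+1} − mk`. Induction on `n` then gives the product, after splitting
the new factor in the `k`-th term as `x + b_{n+1} − mn = (x − m(n−k)) + (b_{n+1} − mk)`.
-/

open Finset

namespace MWeight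

lemma fallFact_succ (x : ℤ) (n m : ℕ) :
    fallFact x (n + 1) m = fallFact x n m * (x - m * n) :=
  prod_range_succ _ _

lemma mem_cells {b : ℕ → ℕ} {n : ℕ} {c : ℕ × ℕ} :
    c ∈ cells b n ↔ 1 ≤ c.1 ∧ c.1 ≤ b c.2 ∧ 1 ≤ c.2 ∧ c.2 ≤ n := by
  simp only [cells, mem_filter, mem_product, mem_Icc]
  constructor
  · rintro ⟨⟨⟨h1, _⟩, h3, h4⟩, h2⟩
    exact ⟨h1, h2, h3, h4⟩
  · rintro ⟨h1, h2, h3, h4⟩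
    exact ⟨⟨⟨h1, h2.trans (le_sup (mem_Icc.2 ⟨h3, h4⟩))⟩, h3, h4⟩, h2⟩

def rowCount (F : Finset (ℕ × ℕ)) (i : ℕ) : ℕ := #(F.filter fun c => c.1 = i)

lemma wtm_eq_prod_of_subset {m : ℕ} {F : Finset (ℕ × ℕ)} {R : Finset ℕ}
    (hR : F.image Prod.fst ⊆ R) : wtm m F = ∏ i ∈ R, fallFact 1 (rowCount F i) m := by
  refine prod_subset hR fun i _ hi => ?_
  have : rowCount F i = 0 := by
    rw [rowCount, card_eq_zero, filter_eq_empty_iff]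
    exact fun c hc hci => hi (mem_image.2 ⟨c, hc, hci⟩)
  change fallFact 1 (rowCount F i) m = 1
  rw [this, fallFact, range_zero, prod_empty]

lemma rowCount_insert {F : Finset (ℕ × ℕ)} {i j : ℕ} (h : (i, j) ∉ F) (r : ℕ) :
    rowCount (insert (i, j) F) r = rowCount F r + if i = r then 1 else 0 := by
  unfold rowCount
  rw [filter_insert]
  split_ifs
  · rw [card_insert_of_notMem (fun h' => h (mem_filter.1 h').1)]
  · rfl

lemma wtm_insert {m : ℕ} {F : Finset (ℕ × ℕ)} {i j : ℕ} (h : (i, j) ∉ F) :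
    wtm m (insert (i, j) F) = wtm m F * (1 - m * rowCount F i) := by
  set R := insert i (F.image Prod.fst)
  rw [wtm_eq_prod_of_subset (R := R) (by rw [image_insert]),
    wtm_eq_prod_of_subset (R := R) (subset_insert _ _),
    ← mul_prod_erase R _ (mem_insert_self _ _), ← mul_prod_erase R _ (mem_insert_self _ _),
    prod_congr rfl fun r hr => by rw [rowCount_insert h, if_neg (ne_of_mem_erase hr).symm, add_zero],
    rowCount_insert h, if_pos rfl, fallFact_succ]
  ring

lemma sum_wtm_insert {m : ℕ} {F : Finset (ℕ × ℕ)} {j : ℕ} (hj : ∀ c ∈ F, c.2 ≠ j)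
    {R : Finset ℕ} (hR : F.image Prod.fst ⊆ R) :
    ∑ i ∈ R, wtm m (insert (i, j) F) = (#R - m * #F) * wtm m F := by
  have hcard : #F = ∑ i ∈ R, rowCount F i :=
    card_eq_sum_card_fiberwise fun c hc => hR (mem_image_of_mem _ hc)
  rw [sum_congr rfl fun i _ => wtm_insert fun h => hj _ h rfl, ← mul_sum, hcard,
    sum_sub_distrib, ← mul_sum]
  push_cast
  simp only [sum_const, nsmul_eq_mul, mul_one]
  ring


def filePlacements (b : ℕ → ℕ) (n k : ℕ) : Finset (Finset (ℕ × ℕ)) :=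
  (cells b n).powerset.filter
    (fun F => (∀ c ∈ F, ∀ c' ∈ F, c.2 = c'.2 → c = c') ∧ F.card = k)

lemma fkm_eq_sum_filePlacements (m : ℕ) (b : ℕ → ℕ) (n k : ℕ) :
    fkm m b n k = ∑ F ∈ filePlacements b n k, wtm m F := rfl

lemma mem_filePlacements {b : ℕ → ℕ} {n k : ℕ} {F : Finset (ℕ × ℕ)} :
    F ∈ filePlacements b n k ↔
      F ⊆ cells b n ∧ Set.InjOn Prod.snd (F : Set (ℕ × ℕ)) ∧ #F = k := by
  rw [filePlacements, mem_filter, mem_powerset]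
  rfl

lemma le_of_mem_filePlacements {b : ℕ → ℕ} {n k : ℕ} {F : Finset (ℕ × ℕ)}
    (hF : F ∈ filePlacements b n k) : k ≤ n := by
  obtain ⟨hsub, hinj, rfl⟩ := mem_filePlacements.1 hF
  simpa using card_le_card_of_injOn Prod.snd (t := Icc 1 n)
    (fun c hc => by have := mem_cells.1 (hsub hc); simp; omega) hinj

lemma fkm_eq_zero_of_lt {m : ℕ} {b : ℕ → ℕ} {n k : ℕ} (h : n < k) : fkm m b n k = 0 :=
  sum_eq_zero fun _ hF => absurd (le_of_mem_filePlacements hF) (not_le.2 h)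

lemma fkm_zero (m : ℕ) (b : ℕ → ℕ) (n : ℕ) : fkm m b n 0 = 1 := by
  have : filePlacements b n 0 = {∅} := by
    ext F
    rw [mem_filePlacements, card_eq_zero, mem_singleton]
    exact ⟨fun h => h.2.2, by rintro rfl; simp⟩
  simp [fkm_eq_sum_filePlacements, this, wtm]

lemma filter_forall_le_filePlacements_succ (b : ℕ → ℕ) (n k : ℕ) :
    (filePlacements b (n + 1) k).filter (fun F => ∀ c ∈ F, c.2 ≤ n) = filePlacements b n k := by
  ext F
  simp only [mem_filter, mem_filePlacements, subset_iff, mem_cells]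
  constructor
  · rintro ⟨⟨hsub, hinj, hcard⟩, hle⟩
    exact ⟨fun c hc => ⟨(hsub hc).1, (hsub hc).2.1, (hsub hc).2.2.1, hle c hc⟩, hinj, hcard⟩
  · rintro ⟨hsub, hinj, hcard⟩
    exact ⟨⟨fun c hc => ⟨(hsub hc).1, (hsub hc).2.1, (hsub hc).2.2.1, (hsub hc).2.2.2.trans n.le_succ⟩,
      hinj, hcard⟩, fun c hc => (hsub hc).2.2.2⟩


lemma cells_subset_cells_succ (b : ℕ → ℕ) (n : ℕ) : cells b n ⊆ cells b (n + 1) := fun c hc => by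
  have := mem_cells.1 hc
  exact mem_cells.2 ⟨this.1, this.2.1, this.2.2.1, this.2.2.2.trans n.le_succ⟩

lemma insert_mem_filePlacements_succ {b : ℕ → ℕ} {n k i : ℕ} {F : Finset (ℕ × ℕ)}
    (hF : F ∈ filePlacements b n k) (hi : i ∈ Icc 1 (b (n + 1))) :
    insert (i, n + 1) F ∈ filePlacements b (n + 1) (k + 1) := by
  obtain ⟨hsub, hinj, hcard⟩ := mem_filePlacements.1 hF
  have hnew : ∀ c ∈ F, c.2 ≠ n + 1 := fun c hc => by have := mem_cells.1 (hsub hc); omega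
  have hnotMem : (i, n + 1) ∉ F := fun h => hnew _ h rfl
  refine mem_filePlacements.2 ⟨insert_subset ?_ (hsub.trans (cells_subset_cells_succ b n)), ?_, ?_⟩
  · exact mem_cells.2 ⟨(mem_Icc.1 hi).1, (mem_Icc.1 hi).2, n.succ_pos, le_rfl⟩
  · rw [coe_insert, Set.injOn_insert (mem_coe.not.2 hnotMem)]
    exact ⟨hinj, fun ⟨c, hc, hcn⟩ => hnew c hc hcn⟩
  · rw [card_insert_of_notMem hnotMem, hcard]

lemma erase_mem_filePlacements_of_succ {b : ℕ → ℕ} {n k : ℕ} {G : Finset (ℕ × ℕ)} {c : ℕ × ℕ}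
    (hG : G ∈ filePlacements b (n + 1) (k + 1)) (hc : c ∈ G) (hcn : c.2 = n + 1) :
    G.erase c ∈ filePlacements b n k := by
  obtain ⟨hsub, hinj, hcard⟩ := mem_filePlacements.1 hG
  refine mem_filePlacements.2 ⟨fun d hd => ?_, hinj.mono (coe_subset.2 (erase_subset c G)), ?_⟩
  · obtain ⟨hdc, hdG⟩ := mem_erase.1 hd
    have hcol : d.2 ≠ c.2 := fun h => hdc (hinj hdG hc h)
    have := mem_cells.1 (hsub hdG)
    exact mem_cells.2 ⟨this.1, this.2.1, this.2.2.1, by omega⟩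
  · rw [card_erase_of_mem hc, hcard, Nat.add_sub_cancel]

lemma filter_not_forall_le_filePlacements_succ (b : ℕ → ℕ) (n k : ℕ) :
    (filePlacements b (n + 1) (k + 1)).filter (fun G => ¬∀ c ∈ G, c.2 ≤ n) =
      (filePlacements b n k ×ˢ Icc 1 (b (n + 1))).image fun p => insert (p.2, n + 1) p.1 := by
  ext G
  simp only [mem_filter, mem_image, mem_product, not_forall, not_le]
  constructor
  · rintro ⟨hG, c, hc, hcn⟩
    have hcell := mem_cells.1 ((mem_filePlacements.1 hG).1 hc)
    have hcol : c.2 = n + 1 := by omega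
    refine ⟨(G.erase c, c.1), ⟨erase_mem_filePlacements_of_succ hG hc hcol, ?_⟩, ?_⟩
    · exact mem_Icc.2 ⟨hcell.1, hcol ▸ hcell.2.1⟩
    · rw [← hcol, insert_erase hc]
  · rintro ⟨⟨F, i⟩, ⟨hF, hi⟩, rfl⟩
    exact ⟨insert_mem_filePlacements_succ hF hi, (i, n + 1), mem_insert_self _ _, n.lt_succ_self⟩

lemma eq_of_insert_eq_insert_of_column {F F' : Finset (ℕ × ℕ)} {i i' j : ℕ}
    (hF : ∀ c ∈ F, c.2 ≠ j) (hF' : ∀ c ∈ F', c.2 ≠ j)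
    (h : insert (i, j) F = insert (i', j) F') : F = F' ∧ i = i' := by
  have erase_column : ∀ {G : Finset (ℕ × ℕ)} {r : ℕ}, (∀ c ∈ G, c.2 ≠ j) →
      (insert (r, j) G).filter (fun c => c.2 ≠ j) = G := fun hG => by
    rw [filter_insert, if_neg (not_not.2 rfl), filter_true_of_mem hG]
  refine ⟨by rw [← erase_column hF, h, erase_column hF'], ?_⟩
  rcases mem_insert.1 (h ▸ mem_insert_self (i, j) F) with h' | h'
  · exact congrArg Prod.fst h'
  · exact absurd rfl (hF' _ h')


lemma fkm_succ_succ {m : ℕ} {b : ℕ → ℕ} {n : ℕ} (hb : ∀ j, 1 ≤ j → j ≤ n → b j ≤ b (n + 1))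
    (k : ℕ) : fkm m b (n + 1) (k + 1) = fkm m b n (k + 1) + (b (n + 1) - m * k) * fkm m b n k := by
  have hcol : ∀ F ∈ filePlacements b n k, ∀ c ∈ F, c.2 ≠ n + 1 := fun F hF c hc => by
    have := mem_cells.1 ((mem_filePlacements.1 hF).1 hc)
    omega
  rw [fkm_eq_sum_filePlacements, ← sum_filter_add_sum_filter_not _ (fun G => ∀ c ∈ G, c.2 ≤ n),
    filter_forall_le_filePlacements_succ, filter_not_forall_le_filePlacements_succ,
    sum_image fun p hp q hq h => ?_, sum_product, fkm_eq_sum_filePlacements,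
    fkm_eq_sum_filePlacements, mul_sum]
  · refine congrArg _ (sum_congr rfl fun F hF => ?_)
    have hrows : F.image Prod.fst ⊆ Icc 1 (b (n + 1)) := fun i hi => by
      obtain ⟨c, hc, rfl⟩ := mem_image.1 hi
      have := mem_cells.1 ((mem_filePlacements.1 hF).1 hc)
      exact mem_Icc.2 ⟨this.1, this.2.1.trans (hb _ this.2.2.1 this.2.2.2)⟩
    rw [sum_wtm_insert (hcol F hF) hrows, (mem_filePlacements.1 hF).2.2, Nat.card_Icc,
      Nat.add_sub_cancel]
  · simp only [coe_product, Set.mem_prod, mem_coe] at hp hq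
    obtain ⟨hF, hi⟩ := eq_of_insert_eq_insert_of_column (hcol _ hp.1) (hcol _ hq.1) h
    exact Prod.ext hF hi

lemma sum_fkm_mul_fallFact_succ {m : ℕ} {b : ℕ → ℕ} {n : ℕ}
    (hb : ∀ j, 1 ≤ j → j ≤ n → b j ≤ b (n + 1)) (x : ℤ) :
    ∑ k ∈ range (n + 2), fkm m b (n + 1) k * fallFact x (n + 1 - k) m =
      (∑ k ∈ range (n + 1), fkm m b n k * fallFact x (n - k) m) * (x + b (n + 1) - m * n) := by
  have shift : ∑ k ∈ range (n + 1), fkm m b n k * fallFact x (n + 1 - k) m =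
      fallFact x (n + 1) m + ∑ k ∈ range (n + 1), fkm m b n (k + 1) * fallFact x (n - k) m := by
    rw [sum_range_succ', sum_range_succ (fun k => fkm m b n (k + 1) * _),
      fkm_eq_zero_of_lt n.lt_succ_self, fkm_zero]
    simp only [Nat.add_sub_add_right, Nat.sub_zero, one_mul, zero_mul, add_zero]
    exact add_comm _ _
  have split : ∀ k ∈ range (n + 1), fkm m b n k * fallFact x (n - k) m * (x + b (n + 1) - m * n) =
      fkm m b n k * fallFact x (n + 1 - k) m +
        (b (n + 1) - m * k) * (fkm m b n k * fallFact x (n - k) m) := fun k hk => by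
    have hkn := mem_range_succ_iff.1 hk
    rw [Nat.sub_add_comm hkn, fallFact_succ, Nat.cast_sub hkn]
    ring
  rw [sum_range_succ', fkm_zero, sum_mul, sum_congr rfl split, sum_add_distrib, shift]
  simp only [fkm_succ_succ hb, Nat.add_sub_add_right, Nat.sub_zero, add_mul, mul_assoc, sum_add_distrib]
  ring

end MWeight

theorem m_weight_factorization_general (m n : ℕ) (b : ℕ → ℕ)
    (hmono : ∀ j k, 1 ≤ j → j ≤ k → k ≤ n → b j ≤ b k) (x : ℤ) :
    ∑ k ∈ Finset.range (n + 1), fkm m b n k * fallFact x (n - k) m =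
      ∏ j ∈ Finset.Icc 1 n, (x + (b j : ℤ) - (m : ℤ) * ((j : ℤ) - 1)) := by
  induction n with
  | zero => simp [MWeight.fkm_zero, fallFact]
  | succ n ih =>
    rw [MWeight.sum_fkm_mul_fallFact_succ (fun j hj hjn => hmono j (n + 1) hj (by omega) le_rfl),
      ih fun j k hj hjk hkn => hmono j k hj hjk (by omega), prod_Icc_succ_top (by omega)]
    push_cast
    ring

/-- The `m`-weight Factorization Theorem (Theorem 6.1): for any Ferrers board
`B = (b_1,…,b_n)`, `∑_k f_{k,m}(B) x↓_{n-k,m} = ∏_{j=1}^n (x + b_j − (j−1)m)`. -/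
theorem m_weight_factorization (m n : ℕ) (hm : 0 < m) (b : ℕ → ℕ)
    (hmono : ∀ j k, 1 ≤ j → j ≤ k → k ≤ n → b j ≤ b k) (x : ℤ) :
    ∑ k ∈ Finset.range (n + 1), fkm m b n k * fallFact x (n - k) m =
      ∏ j ∈ Finset.Icc 1 n, (x + (b j : ℤ) - (m : ℤ) * ((j : ℤ) - 1)) :=
  m_weight_factorization_general m n b hmono x
end

section
/- For any positive integer m: (i) if B is an m-restricted Ferrers board then l(B) is m-increasing; (ii) if B is an m-increasing Ferrers board then l(B) is m-restricted; (iii) if B is a singleton board then l(l(B)) = B, so l is an involution on singleton boards. -/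
/-- A singleton board: if `b j` is not a multiple of `m` (and `j < n`) then
`⌊b_{j+1}⌋_m > ⌊b_j⌋_m`. -/
def IsSingletonBoard (m : ℕ) (b : ℕ → ℕ) (n : ℕ) : Prop :=
  ∀ j, 1 ≤ j → j < n → ¬ (m ∣ b j) → m * (b j / m) < m * (b (j + 1) / m)

/-- `l_i`: the number of cells of the board in level `i` (rows `(i−1)m+1, …, im`). -/
def lvlCount (m : ℕ) (b : ℕ → ℕ) (n i : ℕ) : ℕ :=
  ∑ j ∈ Finset.Icc 1 n, (min (b j) (i * m) - min (b j) ((i - 1) * m))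

/-- `t`: the largest index with `l_t ≠ 0` (0 if the board is empty). -/
def tIdx (m : ℕ) (b : ℕ → ℕ) (n : ℕ) : ℕ :=
  (Finset.Icc 1 ((Finset.Icc 1 n).sup b)).sup fun i => if lvlCount m b n i ≠ 0 then i else 0

/-- The board `l(B) = (l_t, l_{t−1}, …, l_1)`. -/
def lOp (m : ℕ) (b : ℕ → ℕ) (n : ℕ) : ℕ → ℕ :=
  fun j => if 1 ≤ j ∧ j ≤ tIdx m b n then lvlCount m b n (tIdx m b n + 1 - j) else 0

/-!
A column of height `x` has `c_i(x) = min x (i m) - min x ((i - 1) m)` cells in level `i`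
(`levelCells`), and `c_{i+1}(x + m) = c_i(x)`. Comparing column `j` in level `i` with
column `j + 1` in level `i + 1` gives `l_{i+1} + c_i(b_n) ≤ l_i` for `m`-restricted boards and the
reverse inequality for `m`-increasing ones; the share `c_i(b_n)` of the last column is at most `m`,
and equals `m` as soon as level `i + 1` is occupied.

For a singleton board, level `i` read from the last column backwards is a staircase
`m, …, m, r, 0, …, 0` with `r < m`: a column that only partly fills level `i` is followed by one
that fills it. Such a staircase is recovered from its total `l_i` by cutting it into blocks of `m`,
so `c_k(l_i) = c_i(b_{n+1-k})`, and summing over `i` telescopes to `b_{n+1-k}`, the `k`-th column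
of `l(l(B))`.
-/

open Finset

def levelCells (m i x : ℕ) : ℕ :=
  min x (i * m) - min x ((i - 1) * m)

theorem lvlCount_eq_sum_levelCells (m : ℕ) (b : ℕ → ℕ) (n i : ℕ) :
    lvlCount m b n i = ∑ j ∈ Icc 1 n, levelCells m i (b j) :=
  rfl

section levelCells

variable {m i : ℕ}

theorem sub_one_mul_add_self (hi : 1 ≤ i) : (i - 1) * m + m = i * m := by
  obtain ⟨k, rfl⟩ := Nat.exists_eq_add_of_le' hi
  simp [Nat.succ_mul]

theorem levelCells_le (hi : 1 ≤ i) (x : ℕ) : levelCells m i x ≤ m := by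
  have := sub_one_mul_add_self (m := m) hi
  unfold levelCells; omega

theorem levelCells_of_mul_le {x : ℕ} (hi : 1 ≤ i) (hx : i * m ≤ x) :
    levelCells m i x = m := by
  have := sub_one_mul_add_self (m := m) hi
  unfold levelCells; omega

theorem levelCells_eq_zero_of_le {x : ℕ} (hx : x ≤ (i - 1) * m) : levelCells m i x = 0 := by
  have : (i - 1) * m ≤ i * m := Nat.mul_le_mul_right m (Nat.sub_le i 1)
  unfold levelCells; omega

theorem levelCells_eq_zero_iff (hm : 0 < m) (hi : 1 ≤ i) {x : ℕ} :
    levelCells m i x = 0 ↔ x ≤ (i - 1) * m := by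
  have := sub_one_mul_add_self (m := m) hi
  unfold levelCells; omega

theorem levelCells_mono (m i : ℕ) : Monotone (levelCells m i) := by
  intro x y hxy
  have : (i - 1) * m ≤ i * m := Nat.mul_le_mul_right m (Nat.sub_le i 1)
  unfold levelCells; omega

theorem levelCells_anti {i' : ℕ} (hi : 1 ≤ i) (hii' : i ≤ i') (x : ℕ) :
    levelCells m i' x ≤ levelCells m i x := by
  have := sub_one_mul_add_self (m := m) hi
  have := sub_one_mul_add_self (m := m) (hi.trans hii')
  have : (i - 1) * m ≤ (i' - 1) * m := Nat.mul_le_mul_right m (by omega)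
  unfold levelCells; omega

theorem levelCells_succ_add_self (hi : 1 ≤ i) (x : ℕ) :
    levelCells m (i + 1) (x + m) = levelCells m i x := by
  have := sub_one_mul_add_self (m := m) hi
  have : (i + 1) * m = i * m + m := Nat.succ_mul i m
  unfold levelCells; simp only [Nat.add_sub_cancel]; omega

theorem sum_levelCells (m x T : ℕ) : ∑ i ∈ Icc 1 T, levelCells m i x = min x (T * m) := by
  induction T with
  | zero => simp
  | succ T ih =>
    rw [sum_Icc_succ_top (by omega), ih]
    have : (T + 1) * m = T * m + m := Nat.succ_mul T m
    unfold levelCells; simp only [Nat.add_sub_cancel]; omega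

end levelCells

section staircase

variable {m N : ℕ} {s : ℕ → ℕ}

-- `hle` and `hfull` say that `s 1, …, s N` has the shape `m, …, m, r, 0, …, 0` with `r < m`.
theorem sum_Icc_eq_min_of_staircase (hle : ∀ k, s k ≤ m)
    (hfull : ∀ k, 1 ≤ k → k < N → 0 < s (k + 1) → s k = m) {K : ℕ} (hKN : K ≤ N) :
    ∑ k ∈ Icc 1 K, s k = min (∑ k ∈ Icc 1 N, s k) (K * m) := by
  have hsub : Icc 1 K ⊆ Icc 1 N := Icc_subset_Icc_right hKN
  by_cases hall : ∀ k ∈ Icc 1 K, s k = m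
  · have hK : ∑ k ∈ Icc 1 K, s k = K * m := by
      rw [sum_congr rfl hall, sum_const, Nat.card_Icc, smul_eq_mul, Nat.add_sub_cancel]
    have := sum_le_sum_of_subset hsub (f := s)
    omega
  · push Not at hall
    obtain ⟨k₀, hk₀, hk₀m⟩ := hall
    have hk₀ := mem_Icc.1 hk₀
    have hzero : ∀ k, k₀ < k → k ≤ N → s k = 0 := by
      intro k hk hkN
      induction k, hk using Nat.le_induction with
      | base => by_contra h; exact hk₀m (hfull k₀ hk₀.1 (by omega) (Nat.pos_of_ne_zero h))
      | succ k hk ih =>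
        by_contra h
        have := hfull k (by omega) (by omega) (Nat.pos_of_ne_zero h)
        have := ih (by omega)
        have := hle k₀
        omega
    have hN : ∑ k ∈ Icc 1 K, s k = ∑ k ∈ Icc 1 N, s k := by
      refine sum_subset hsub fun k hk hkK => ?_
      simp only [mem_Icc] at hk hkK
      exact hzero k (by omega) hk.2
    have : ∑ k ∈ Icc 1 K, s k ≤ K * m := by
      simpa using sum_le_card_nsmul (Icc 1 K) s m fun k _ => hle k
    omega

theorem levelCells_sum_of_staircase (hle : ∀ k, s k ≤ m)
    (hfull : ∀ k, 1 ≤ k → k < N → 0 < s (k + 1) → s k = m) {k : ℕ} (hk : 1 ≤ k)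
    (hkN : k ≤ N) : levelCells m k (∑ k' ∈ Icc 1 N, s k') = s k := by
  obtain ⟨k, rfl⟩ := Nat.exists_eq_add_of_le' hk
  rw [levelCells, Nat.add_sub_cancel, ← sum_Icc_eq_min_of_staircase hle hfull hkN,
    ← sum_Icc_eq_min_of_staircase hle hfull (by omega : k ≤ N), sum_Icc_succ_top (by omega)]
  simp

end staircase

theorem sum_Icc_one_eq_add_sum_Ico (g : ℕ → ℕ) {n : ℕ} (hn : 1 ≤ n) :
    ∑ j ∈ Icc 1 n, g j = g 1 + ∑ j ∈ Ico 1 n, g (j + 1) := by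
  rw [← Finset.Ico_add_one_right_eq_Icc, sum_eq_sum_Ico_succ_bot (by omega), sum_Ico_add']

theorem sum_Icc_one_eq_sum_Ico_add (f : ℕ → ℕ) {n : ℕ} (hn : 1 ≤ n) :
    ∑ j ∈ Icc 1 n, f j = ∑ j ∈ Ico 1 n, f j + f n := by
  rw [← Finset.Ico_add_one_right_eq_Icc, sum_Ico_succ_top hn]

theorem sum_Icc_reflect (f : ℕ → ℕ) (t : ℕ) :
    ∑ j ∈ Icc 1 t, f (t + 1 - j) = ∑ j ∈ Icc 1 t, f j := by
  refine sum_nbij' (fun j => t + 1 - j) (fun j => t + 1 - j) ?_ ?_ ?_ ?_ ?_ <;>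
    intro a ha <;> simp only [mem_Icc] at * <;> omega

section lvlCount

variable {m n i : ℕ} {b : ℕ → ℕ}

theorem lvlCount_anti {i' : ℕ} (hi : 1 ≤ i) (hii' : i ≤ i') :
    lvlCount m b n i' ≤ lvlCount m b n i :=
  sum_le_sum fun j _ => levelCells_anti hi hii' (b j)

theorem lvlCount_le (hi : 1 ≤ i) : lvlCount m b n i ≤ n * m := by
  rw [lvlCount_eq_sum_levelCells]
  simpa using sum_le_card_nsmul (Icc 1 n) _ m fun j _ => levelCells_le (m := m) hi (b j)

theorem lvlCount_eq_zero_iff (hm : 0 < m) (hi : 1 ≤ i) :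
    lvlCount m b n i = 0 ↔ ∀ j ∈ Icc 1 n, b j ≤ (i - 1) * m := by
  simp only [lvlCount_eq_sum_levelCells, sum_eq_zero_iff, levelCells_eq_zero_iff hm hi]

theorem le_tIdx_iff (hm : 0 < m) (hi : 1 ≤ i) :
    i ≤ tIdx m b n ↔ lvlCount m b n i ≠ 0 := by
  rw [tIdx, Finset.le_sup_iff (by simp; omega)]
  constructor
  · rintro ⟨i', hi', hii'⟩
    split_ifs at hii' with h
    · exact fun h0 => h (Nat.eq_zero_of_le_zero (h0 ▸ lvlCount_anti hi hii'))
    · omega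
  · intro h
    refine ⟨i, mem_Icc.2 ⟨hi, ?_⟩, by simp [h]⟩
    obtain ⟨j, hj, hbj⟩ : ∃ j ∈ Icc 1 n, (i - 1) * m < b j := by
      simpa [and_assoc] using mt (lvlCount_eq_zero_iff hm hi).2 h
    have : i - 1 ≤ (i - 1) * m := Nat.le_mul_of_pos_right _ hm
    exact (show i ≤ b j by omega).trans (le_sup (f := b) hj)

theorem lvlCount_tIdx_succ (hm : 0 < m) : lvlCount m b n (tIdx m b n + 1) = 0 := by
  by_contra h
  exact Nat.not_succ_le_self _ ((le_tIdx_iff hm (Nat.le_add_left 1 _)).2 h)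

theorem le_tIdx_mul (hm : 0 < m) {j : ℕ} (hj : j ∈ Icc 1 n) : b j ≤ tIdx m b n * m := by
  simpa using (lvlCount_eq_zero_iff hm (Nat.le_add_left 1 _)).1 (lvlCount_tIdx_succ hm) j hj

theorem lOp_apply {j : ℕ} (hj : 1 ≤ j) (hjt : j ≤ tIdx m b n) :
    lOp m b n j = lvlCount m b n (tIdx m b n + 1 - j) :=
  if_pos ⟨hj, hjt⟩

theorem lOp_le (m : ℕ) (b : ℕ → ℕ) (n j : ℕ) : lOp m b n j ≤ n * m := by
  unfold lOp
  split_ifs with h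
  · exact lvlCount_le (by omega)
  · exact Nat.zero_le _

theorem lOp_one (ht : 1 ≤ tIdx m b n) : lOp m b n 1 = lvlCount m b n (tIdx m b n) := by
  rw [lOp_apply le_rfl ht, Nat.add_sub_cancel]

theorem lOp_pair {j : ℕ} (hj : 1 ≤ j) (hjt : j < tIdx m b n) :
    lOp m b n j = lvlCount m b n (tIdx m b n - j + 1) ∧
      lOp m b n (j + 1) = lvlCount m b n (tIdx m b n - j) := by
  rw [lOp_apply hj hjt.le, lOp_apply (by omega) hjt]
  constructor <;> congr 1 <;> omega

end lvlCount

section shift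

variable {m n i : ℕ} {b : ℕ → ℕ}

theorem lvlCount_succ_add_levelCells_le (hb₁ : b 1 ≤ m)
    (hres : ∀ j, 1 ≤ j → j < n → b (j + 1) ≤ b j + m) (hi : 1 ≤ i) (hn : 1 ≤ n) :
    lvlCount m b n (i + 1) + levelCells m i (b n) ≤ lvlCount m b n i := by
  have hfirst : levelCells m (i + 1) (b 1) = 0 :=
    levelCells_eq_zero_of_le (hb₁.trans (by simpa using Nat.le_mul_of_pos_left m hi))
  have hstep : ∑ j ∈ Ico 1 n, levelCells m (i + 1) (b (j + 1))
      ≤ ∑ j ∈ Ico 1 n, levelCells m i (b j) := by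
    refine sum_le_sum fun j hj => ?_
    have hj := mem_Ico.1 hj
    rw [← levelCells_succ_add_self hi]
    exact levelCells_mono m (i + 1) (hres j hj.1 hj.2)
  rw [lvlCount_eq_sum_levelCells, lvlCount_eq_sum_levelCells,
    sum_Icc_one_eq_add_sum_Ico (fun j => levelCells m (i + 1) (b j)) hn,
    sum_Icc_one_eq_sum_Ico_add (fun j => levelCells m i (b j)) hn, hfirst]
  omega

theorem lvlCount_le_lvlCount_succ_add_levelCells
    (hinc : ∀ j, 1 ≤ j → j < n → b j + m ≤ b (j + 1)) (hi : 1 ≤ i) :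
    lvlCount m b n i ≤ lvlCount m b n (i + 1) + levelCells m i (b n) := by
  rcases Nat.eq_zero_or_pos n with rfl | hn
  · simp [lvlCount]
  have hstep : ∑ j ∈ Ico 1 n, levelCells m i (b j)
      ≤ ∑ j ∈ Ico 1 n, levelCells m (i + 1) (b (j + 1)) := by
    refine sum_le_sum fun j hj => ?_
    have hj := mem_Ico.1 hj
    rw [← levelCells_succ_add_self hi]
    exact levelCells_mono m (i + 1) (hinc j hj.1 hj.2)
  rw [lvlCount_eq_sum_levelCells, lvlCount_eq_sum_levelCells,
    sum_Icc_one_eq_add_sum_Ico (fun j => levelCells m (i + 1) (b j)) hn,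
    sum_Icc_one_eq_sum_Ico_add (fun j => levelCells m i (b j)) hn]
  omega

theorem lvlCount_succ_add_le (hm : 0 < m) (hmono : MonotoneOn b (Set.Icc 1 n))
    (hb₁ : 1 ≤ n → b 1 ≤ m) (hres : ∀ j, 1 ≤ j → j < n → b (j + 1) ≤ b j + m) (hi : 1 ≤ i)
    (hne : lvlCount m b n (i + 1) ≠ 0) : lvlCount m b n (i + 1) + m ≤ lvlCount m b n i := by
  obtain ⟨j, hj, hbj⟩ : ∃ j ∈ Icc 1 n, i * m < b j := by
    simpa [and_assoc] using mt (lvlCount_eq_zero_iff hm (Nat.le_add_left 1 i)).2 hne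
  have hj := mem_Icc.1 hj
  have hn : 1 ≤ n := hj.1.trans hj.2
  have hfull : levelCells m i (b n) = m :=
    levelCells_of_mul_le hi (hbj.le.trans (hmono hj ⟨hn, le_rfl⟩ hj.2))
  simpa [hfull] using lvlCount_succ_add_levelCells_le (hb₁ hn) hres hi hn

theorem lvlCount_le_lvlCount_succ_add (hinc : ∀ j, 1 ≤ j → j < n → b j + m ≤ b (j + 1))
    (hi : 1 ≤ i) : lvlCount m b n i ≤ lvlCount m b n (i + 1) + m :=
  (lvlCount_le_lvlCount_succ_add_levelCells hinc hi).trans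
    (Nat.add_le_add_left (levelCells_le hi _) _)

end shift

theorem lvlCount_lOp (m : ℕ) (b : ℕ → ℕ) (n k : ℕ) :
    lvlCount m (lOp m b n) (tIdx m b n) k
      = ∑ i ∈ Icc 1 (tIdx m b n), levelCells m k (lvlCount m b n i) := by
  rw [lvlCount_eq_sum_levelCells, ← sum_Icc_reflect (fun i => levelCells m k (lvlCount m b n i))]
  refine sum_congr rfl fun j hj => ?_
  rw [lOp_apply (mem_Icc.1 hj).1 (mem_Icc.1 hj).2]

theorem lvlCount_lOp_eq_zero {m : ℕ} (hm : 0 < m) (b : ℕ → ℕ) {n k : ℕ} (hk : n < k) :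
    lvlCount m (lOp m b n) (tIdx m b n) k = 0 :=
  (lvlCount_eq_zero_iff hm (by omega)).2 fun j _ =>
    (lOp_le m b n j).trans (Nat.mul_le_mul_right m (by omega))

namespace IsSingletonBoard

variable {m n i : ℕ} {b : ℕ → ℕ}

theorem mul_le_succ (hs : IsSingletonBoard m b n) (hmono : MonotoneOn b (Set.Icc 1 n))
    (hi : 1 ≤ i) {p : ℕ} (hp : 1 ≤ p) (hpn : p < n) (hbp : (i - 1) * m < b p) :
    i * m ≤ b (p + 1) := by
  by_cases hfull : i * m ≤ b p
  · exact hfull.trans (hmono ⟨hp, hpn.le⟩ ⟨by omega, hpn⟩ (Nat.le_succ p))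
  have hi' := sub_one_mul_add_self (m := m) hi
  have hq : b p / m = i - 1 :=
    Nat.div_eq_of_lt_le hbp.le (by rw [Nat.sub_add_cancel hi]; omega)
  have hndvd : ¬ m ∣ b p := by
    rw [Nat.dvd_iff_mod_eq_zero]
    have := Nat.mod_add_div (b p) m
    rw [hq, mul_comm] at this
    omega
  have hlt := hs p hp hpn hndvd
  rw [hq] at hlt
  have : i ≤ b (p + 1) / m := by have := Nat.lt_of_mul_lt_mul_left hlt; omega
  calc i * m ≤ b (p + 1) / m * m := Nat.mul_le_mul_right m this
    _ ≤ b (p + 1) := Nat.div_mul_le_self _ _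

theorem levelCells_lvlCount (hs : IsSingletonBoard m b n) (hmono : MonotoneOn b (Set.Icc 1 n))
    (hi : 1 ≤ i) {k : ℕ} (hk : 1 ≤ k) (hkn : k ≤ n) :
    levelCells m k (lvlCount m b n i) = levelCells m i (b (n + 1 - k)) := by
  rw [lvlCount_eq_sum_levelCells, ← sum_Icc_reflect]
  refine levelCells_sum_of_staircase (fun _ => levelCells_le hi _) ?_ hk hkn
  intro k' hk' hk'n hpos
  rw [show n + 1 - (k' + 1) = n - k' by omega] at hpos
  have hreach : (i - 1) * m < b (n - k') := by
    by_contra h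
    rw [levelCells_eq_zero_of_le (not_lt.1 h)] at hpos
    exact hpos.false
  rw [show n + 1 - k' = n - k' + 1 by omega]
  exact levelCells_of_mul_le hi (hs.mul_le_succ hmono hi (by omega) (by omega) hreach)

theorem lvlCount_lOp (hm : 0 < m) (hs : IsSingletonBoard m b n)
    (hmono : MonotoneOn b (Set.Icc 1 n)) {k : ℕ} (hk : 1 ≤ k) (hkn : k ≤ n) :
    lvlCount m (lOp m b n) (tIdx m b n) k = b (n + 1 - k) := by
  rw [_root_.lvlCount_lOp,
    sum_congr rfl fun i hi => hs.levelCells_lvlCount hmono (mem_Icc.1 hi).1 hk hkn,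
    sum_levelCells]
  exact min_eq_left (le_tIdx_mul hm (mem_Icc.2 ⟨by omega, by omega⟩))

theorem tIdx_lOp (hm : 0 < m) (hs : IsSingletonBoard m b n) (hmono : MonotoneOn b (Set.Icc 1 n))
    (hb₁ : 1 ≤ n → 0 < b 1) : tIdx m (lOp m b n) (tIdx m b n) = n := by
  apply le_antisymm
  · by_contra h
    exact (le_tIdx_iff hm (by omega)).1 (not_le.1 h)
      (lvlCount_lOp_eq_zero hm b (Nat.lt_succ_self n))
  · rcases Nat.eq_zero_or_pos n with hn | hn
    · simp [hn]
    rw [le_tIdx_iff hm hn, hs.lvlCount_lOp hm hmono hn le_rfl, Nat.add_sub_cancel_left]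
    exact (hb₁ hn).ne'

end IsSingletonBoard

/-- Proposition 7.4: (i) if `B` is `m`-restricted then `l(B)` is `m`-increasing;
(ii) if `B` is `m`-increasing then `l(B)` is `m`-restricted; (iii) if `B` is a
singleton board (with positive column heights) then `l(l(B)) = B`, so `l` is an
involution on singleton boards. -/
theorem l_operator_properties (m n : ℕ) (hm : 0 < m) (b : ℕ → ℕ)
    (hmono : ∀ j k, 1 ≤ j → j ≤ k → k ≤ n → b j ≤ b k) :
    (((1 ≤ n → b 1 ≤ m) ∧ (∀ j, 1 ≤ j → j < n → b (j + 1) ≤ b j + m)) →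
      ((1 ≤ tIdx m b n → 0 < lOp m b n 1) ∧
        ∀ j, 1 ≤ j → j < tIdx m b n → lOp m b n j + m ≤ lOp m b n (j + 1))) ∧
    (((1 ≤ n → 0 < b 1) ∧ (∀ j, 1 ≤ j → j < n → b j + m ≤ b (j + 1))) →
      ((1 ≤ tIdx m b n → lOp m b n 1 ≤ m) ∧
        ∀ j, 1 ≤ j → j < tIdx m b n → lOp m b n (j + 1) ≤ lOp m b n j + m)) ∧
    ((IsSingletonBoard m b n ∧ (∀ j, 1 ≤ j → j ≤ n → 0 < b j)) →
      (tIdx m (lOp m b n) (tIdx m b n) = n ∧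
        ∀ j, 1 ≤ j → j ≤ n → lOp m (lOp m b n) (tIdx m b n) j = b j)) := by
  have hmono' : MonotoneOn b (Set.Icc 1 n) := fun j hj k hk hjk => hmono j k hj.1 hjk hk.2
  refine ⟨fun ⟨hb₁, hres⟩ => ⟨fun ht => ?_, fun j hj hjt => ?_⟩,
    fun ⟨_, hinc⟩ => ⟨fun ht => ?_, fun j hj hjt => ?_⟩,
    fun ⟨hs, hpos⟩ => ?_⟩
  · rw [lOp_one ht]
    exact Nat.pos_of_ne_zero ((le_tIdx_iff hm ht).1 le_rfl)
  · rw [(lOp_pair hj hjt).1, (lOp_pair hj hjt).2]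
    exact lvlCount_succ_add_le hm hmono' hb₁ hres (by omega)
      ((le_tIdx_iff hm (by omega)).1 (by omega))
  · rw [lOp_one ht]
    simpa [lvlCount_tIdx_succ hm] using lvlCount_le_lvlCount_succ_add hinc ht
  · rw [(lOp_pair hj hjt).1, (lOp_pair hj hjt).2]
    exact lvlCount_le_lvlCount_succ_add hinc (by omega)
  · have ht := hs.tIdx_lOp hm hmono' (hpos 1 le_rfl)
    refine ⟨ht, fun j hj hjn => ?_⟩
    rw [lOp_apply hj (hjn.trans ht.ge), ht, hs.lvlCount_lOp hm hmono' (by omega) (by omega)]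
    congr 1
    omega
end
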